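/- arXiv:1611.05108 — 6 statements merged into one kernel-verified Lean document; each statement's English description precedes it below -/
import Mathlib

section
/- Let n = n₁ + ⋯ + n_k, let C ∈ ℙ_n, let D = D₁ ⊕ ⋯ ⊕ D_k be block diagonal with D_j ∈ ℙ_{n_j}, and let C_j ∈ ℙ_{n_j} be the j-th diagonal block of C in the conformal partition. Then det(I_{n₁} + C₁⁻¹D₁) · det(I_{n₂} + C₂⁻¹D₂) ⋯ det(I_{n_k} + C_k⁻¹D_k) ≤ det(I_n + C⁻¹D). -/
open Matrix
open scoped ComplexOrder

section Helpers

variable {l m : Type*} [Fintype l] [DecidableEq l] [Fintype m] [DecidableEq m]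

open scoped MatrixOrder

private lemma matic_one_le_det_one_add {S : Matrix m m ℂ} (hS : S.PosSemidef) :
    1 ≤ (1 + S).det := by
  have hU : (hS.1.eigenvectorUnitary : Matrix m m ℂ) * star (hS.1.eigenvectorUnitary : Matrix m m ℂ) = 1 :=
    (Matrix.mem_unitaryGroup_iff).mp hS.1.eigenvectorUnitary.2
  have h1 : (1 : Matrix m m ℂ) + S =
      (hS.1.eigenvectorUnitary : Matrix m m ℂ) *
        (1 + diagonal (RCLike.ofReal ∘ hS.1.eigenvalues)) *
        star (hS.1.eigenvectorUnitary : Matrix m m ℂ) := by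
    rw [Matrix.mul_add, Matrix.add_mul, Matrix.mul_one, hU]
    conv_lhs => rw [hS.1.spectral_theorem, Unitary.conjStarAlgAut_apply]
  rw [h1, det_mul_right_comm, hU, one_mul]
  rw [← diagonal_one, diagonal_add, det_diagonal]
  calc (1 : ℂ) = ∏ _i : m, 1 := by simp
    _ ≤ _ := by
        refine Finset.prod_le_prod (fun i _ => zero_le_one) (fun i _ => ?_)
        refine le_add_of_nonneg_right ?_
        simp only [Pi.add_apply, Pi.one_apply, Function.comp_apply]
        exact RCLike.ofReal_nonneg.mpr (hS.eigenvalues_nonneg i)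

private lemma matic_det_mono {A B : Matrix m m ℂ} (hA : A.PosDef)
    (hBA : (B - A).PosSemidef) : A.det ≤ B.det := by
  obtain ⟨E, hE⟩ := CStarAlgebra.nonneg_iff_eq_star_mul_self.mp hBA.nonneg
  rw [star_eq_conjTranspose] at hE
  have hdet : IsUnit A.det := hA.det_pos.ne'.isUnit
  have hB : B = A + Eᴴ * E := by rw [← hE]; abel
  rw [hB, det_add_mul Eᴴ E hdet]
  have h1 : (1:ℂ) ≤ (1 + E * A⁻¹ * Eᴴ).det :=
    matic_one_le_det_one_add ((hA.inv.posSemidef).mul_mul_conjTranspose_same E)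
  calc A.det = A.det * 1 := (mul_one _).symm
    _ ≤ A.det * (1 + E * A⁻¹ * Eᴴ).det :=
        mul_le_mul_of_nonneg_left h1 hA.det_pos.le

private lemma matic_posDef_conj {M : Matrix l l ℂ} (hM : M.PosDef) (P : Matrix l m ℂ)
    (hP : Pᴴ * P = 1) : (Pᴴ * M * P).PosDef := by
  refine Matrix.PosDef.of_dotProduct_mulVec_pos ?_ (fun x hx => ?_)
  · have := hM.isHermitian
    unfold Matrix.IsHermitian at *
    simp [conjTranspose_mul, Matrix.mul_assoc, this]
  · have hPx : P *ᵥ x ≠ 0 := by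
      intro h
      apply hx
      have : (Pᴴ * P) *ᵥ x = 0 := by rw [← mulVec_mulVec, h, mulVec_zero]
      simpa [hP] using this
    have key : star x ⬝ᵥ (Pᴴ * M * P) *ᵥ x = star (P *ᵥ x) ⬝ᵥ M *ᵥ (P *ᵥ x) := by
      rw [← mulVec_mulVec, ← mulVec_mulVec, dotProduct_mulVec, ← star_mulVec]
    rw [key]
    exact hM.dotProduct_mulVec_pos hPx

private lemma matic_inv_block_psd {M : Matrix l l ℂ} (hM : M.PosDef) (P : Matrix l m ℂ)
    (hP : Pᴴ * P = 1) :
    (Pᴴ * M⁻¹ * P - (Pᴴ * M * P)⁻¹).PosSemidef := by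
  set N := Pᴴ * M * P with hN
  have hNpd : N.PosDef := matic_posDef_conj hM P hP
  have hMdet : IsUnit M.det := hM.det_pos.ne'.isUnit
  have hNdet : IsUnit N.det := hNpd.det_pos.ne'.isUnit
  have hMinvH : M⁻¹ᴴ = M⁻¹ := hM.isHermitian.inv
  have hNinvH : N⁻¹ᴴ = N⁻¹ := hNpd.isHermitian.inv
  have key : Pᴴ * M⁻¹ * P - N⁻¹ = (M⁻¹ * P - P * N⁻¹)ᴴ * M * (M⁻¹ * P - P * N⁻¹) := by
    simp only [conjTranspose_sub, conjTranspose_mul, hMinvH, hNinvH, conjTranspose_conjTranspose]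
    simp only [Matrix.sub_mul, Matrix.mul_sub, Matrix.mul_assoc]
    rw [Matrix.mul_nonsing_inv_cancel_left _ _ hMdet,
        Matrix.nonsing_inv_mul_cancel_left _ _ hMdet]
    rw [← Matrix.mul_assoc Pᴴ P, hP, Matrix.one_mul]
    rw [show Pᴴ * (M * (P * N⁻¹)) = N * N⁻¹ from by rw [hN]; simp only [Matrix.mul_assoc]]
    rw [Matrix.mul_nonsing_inv _ hNdet]
    simp
  rw [key]
  exact hM.posSemidef.conjTranspose_mul_mul_same _

private lemma matic_step_ineq {M : Matrix l l ℂ} (hM : M.PosDef) (P : Matrix l m ℂ)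
    (hP : Pᴴ * P = 1) {B : Matrix m m ℂ} (hB : B.PosDef) :
    (1 + (Pᴴ * M * P)⁻¹ * B).det * M.det ≤ (M + P * B * Pᴴ).det := by
  set N := Pᴴ * M * P with hN
  have hNpd : N.PosDef := matic_posDef_conj hM P hP
  have hMdet : IsUnit M.det := hM.det_pos.ne'.isUnit
  set R := CFC.sqrt B with hRdef
  have hRH : Rᴴ = R := (CFC.sqrt_nonneg B).posSemidef.1
  have hRR : R * R = B := CFC.sqrt_mul_sqrt_self B hB.posSemidef.nonneg
  have hdet1 : (M + P * B * Pᴴ).det = M.det * (1 + B * (Pᴴ * M⁻¹ * P)).det := by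
    rw [Matrix.mul_assoc, det_add_mul P (B * Pᴴ) hMdet]
    congr 2
    simp only [Matrix.mul_assoc]
  have e1 : (1 + B * (Pᴴ * M⁻¹ * P)).det = (1 + R * (Pᴴ * M⁻¹ * P) * R).det := by
    rw [← hRR]
    rw [show R * R * (Pᴴ * M⁻¹ * P) = R * (R * (Pᴴ * M⁻¹ * P)) from by
      simp only [Matrix.mul_assoc]]
    rw [det_one_add_mul_comm, Matrix.mul_assoc]
  have e2 : (1 + N⁻¹ * B).det = (1 + R * N⁻¹ * R).det := by
    rw [← hRR, show N⁻¹ * (R * R) = (N⁻¹ * R) * R from by simp only [Matrix.mul_assoc],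
      det_one_add_mul_comm]
    simp only [Matrix.mul_assoc]
  have hpsd : ((1 + R * (Pᴴ * M⁻¹ * P) * R) - (1 + R * N⁻¹ * R)).PosSemidef := by
    have : (1 + R * (Pᴴ * M⁻¹ * P) * R) - (1 + R * N⁻¹ * R)
        = R * (Pᴴ * M⁻¹ * P - N⁻¹) * Rᴴ := by
      rw [hRH]
      simp only [Matrix.mul_sub, Matrix.sub_mul]
      abel
    rw [this]
    exact (matic_inv_block_psd hM P hP).mul_mul_conjTranspose_same R
  have hXpd : (1 + R * N⁻¹ * R).PosDef := by
    have : R * N⁻¹ * R = R * N⁻¹ * Rᴴ := by rw [hRH]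
    rw [this]
    exact Matrix.PosDef.one.add_posSemidef (hNpd.inv.posSemidef.mul_mul_conjTranspose_same R)
  have hmain : (1 + R * N⁻¹ * R).det ≤ (1 + R * (Pᴴ * M⁻¹ * P) * R).det :=
    matic_det_mono hXpd hpsd
  calc (1 + N⁻¹ * B).det * M.det = (1 + R * N⁻¹ * R).det * M.det := by rw [e2]
    _ ≤ (1 + R * (Pᴴ * M⁻¹ * P) * R).det * M.det :=
        mul_le_mul_of_nonneg_right hmain hM.det_pos.le
    _ = (M + P * B * Pᴴ).det := by rw [← e1, hdet1, mul_comm]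

variable {k : ℕ} {n : Fin k → ℕ}

private noncomputable def matic_emb (n : Fin k → ℕ) (a : Fin k) :
    Matrix ((j : Fin k) × Fin (n j)) (Fin (n a)) ℂ :=
  Matrix.of fun i x => if i = ⟨a, x⟩ then 1 else 0

private lemma matic_mul_emb {κ : Type*} [Fintype κ] (a : Fin k)
    (M : Matrix κ ((j : Fin k) × Fin (n j)) ℂ) :
    M * matic_emb n a = M.submatrix id (Sigma.mk a) := by
  ext i y
  simp only [Matrix.mul_apply, matic_emb, Matrix.of_apply, mul_ite, mul_one, mul_zero,
    submatrix_apply, id_eq]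
  rw [Finset.sum_ite_eq']
  simp

private lemma matic_embH_mul {κ : Type*} [Fintype κ] (a : Fin k)
    (M : Matrix ((j : Fin k) × Fin (n j)) κ ℂ) :
    (matic_emb n a)ᴴ * M = M.submatrix (Sigma.mk a) id := by
  ext x j
  simp only [Matrix.mul_apply, conjTranspose_apply, matic_emb, Matrix.of_apply,
    apply_ite (star : ℂ → ℂ), star_one, star_zero, ite_mul, one_mul, zero_mul,
    submatrix_apply, id_eq]
  rw [Finset.sum_ite_eq']
  simp

private lemma matic_emb_conj (a : Fin k)
    (M : Matrix ((j : Fin k) × Fin (n j)) ((j : Fin k) × Fin (n j)) ℂ) :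
    (matic_emb n a)ᴴ * M * matic_emb n a = M.submatrix (Sigma.mk a) (Sigma.mk a) := by
  rw [matic_embH_mul, matic_mul_emb, submatrix_submatrix]
  rfl

private lemma matic_emb_orth (a : Fin k) : (matic_emb n a)ᴴ * matic_emb n a = 1 := by
  rw [matic_embH_mul]
  ext x y
  simp [matic_emb, one_apply, Sigma.mk.inj_iff]

private lemma matic_emb_block (a : Fin k) (B : Matrix (Fin (n a)) (Fin (n a)) ℂ) :
    matic_emb n a * B * (matic_emb n a)ᴴ = blockDiagonal' (Pi.single a B) := by
  ext ⟨j₁, u⟩ ⟨j₂, v⟩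
  simp only [Matrix.mul_apply, conjTranspose_apply, matic_emb, Matrix.of_apply]
  simp only [apply_ite (star : ℂ → ℂ), star_one, star_zero, ite_mul, one_mul, zero_mul,
    mul_ite, mul_one, mul_zero]
  rcases eq_or_ne j₁ a with h1 | h1
  · subst h1
    rcases eq_or_ne j₂ j₁ with h2 | h2
    · subst h2
      simp only [blockDiagonal'_apply_eq, Pi.single_eq_same]
      simp [Sigma.mk.inj_iff, Finset.sum_ite_eq, Finset.sum_ite_eq']
    · rw [blockDiagonal'_apply', dif_neg (Ne.symm h2)]
      simp [Sigma.mk.inj_iff, h2, Ne.symm h2]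
  · have hz : blockDiagonal' (Pi.single a B) (⟨j₁, u⟩ : (j : Fin k) × Fin (n j))
        (⟨j₂, v⟩ : (j : Fin k) × Fin (n j)) = (0 : ℂ) := by
      rw [blockDiagonal'_apply']
      rcases eq_or_ne j₁ j₂ with h2 | h2
      · subst h2
        rw [dif_pos rfl, Pi.single_eq_of_ne h1]
        rfl
      · rw [dif_neg h2]
    rw [hz]
    simp [Sigma.mk.inj_iff, h1, Ne.symm h1]

private lemma matic_blockDiagonal'_posSemidef (f : ∀ j, Matrix (Fin (n j)) (Fin (n j)) ℂ)
    (hf : ∀ j, (f j).PosSemidef) : (blockDiagonal' f).PosSemidef := by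
  choose B hB using fun j => CStarAlgebra.nonneg_iff_eq_star_mul_self.mp (hf j).nonneg
  have : blockDiagonal' f = (blockDiagonal' B)ᴴ * blockDiagonal' B := by
    rw [blockDiagonal'_conjTranspose, ← blockDiagonal'_mul]
    exact congrArg _ (funext hB)
  rw [this]
  exact posSemidef_conjTranspose_mul_self _

end Helpers

/-- **Matic's determinantal inequality.**
Let `n = n₁ + ⋯ + n_k` (the index set is encoded as the sigma type
`(j : Fin k) × Fin (n j)`), let `C` be an `n × n` complex positive definite
matrix, let `D = D₁ ⊕ ⋯ ⊕ D_k` be block diagonal with each `D j` positive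
definite of size `n j`, and let `C.submatrix (Sigma.mk j) (Sigma.mk j)` be the
`j`-th diagonal block of `C` in the conformal partition.  Then
`∏ⱼ det(I + Cⱼ⁻¹ Dⱼ) ≤ det(I + C⁻¹ D)`. -/
theorem matic_determinantal_inequality (k : ℕ) (n : Fin k → ℕ)
    (C : Matrix ((j : Fin k) × Fin (n j)) ((j : Fin k) × Fin (n j)) ℂ)
    (D : (j : Fin k) → Matrix (Fin (n j)) (Fin (n j)) ℂ)
    (hC : C.PosDef) (hD : ∀ j, (D j).PosDef) :
    ∏ j : Fin k, (1 + (C.submatrix (Sigma.mk j) (Sigma.mk j))⁻¹ * D j).det ≤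
      (1 + C⁻¹ * Matrix.blockDiagonal' D).det := by
  classical
  have hCa : ∀ a, (C.submatrix (Sigma.mk a) (Sigma.mk a)).PosDef := fun a => by
    rw [← matic_emb_conj a C]
    exact matic_posDef_conj hC _ (matic_emb_orth a)
  have hdetpos : ∀ a, (0:ℂ) < (1 + (C.submatrix (Sigma.mk a) (Sigma.mk a))⁻¹ * D a).det := by
    intro a
    have h1 : (1 : Matrix (Fin (n a)) (Fin (n a)) ℂ)
        + (C.submatrix (Sigma.mk a) (Sigma.mk a))⁻¹ * D a
        = (C.submatrix (Sigma.mk a) (Sigma.mk a))⁻¹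
          * (C.submatrix (Sigma.mk a) (Sigma.mk a) + D a) := by
      rw [Matrix.mul_add, Matrix.nonsing_inv_mul _ (hCa a).det_pos.ne'.isUnit]
    rw [h1, det_mul]
    exact mul_pos (hCa a).inv.det_pos ((hCa a).add (hD a)).det_pos
  have claim : ∀ S : Finset (Fin k),
      (∏ j ∈ S, (1 + (C.submatrix (Sigma.mk j) (Sigma.mk j))⁻¹ * D j).det) * C.det
        ≤ (C + blockDiagonal' (fun i => if i ∈ S then D i else 0)).det := by
    intro S
    induction S using Finset.induction_on with
    | empty =>
      have h0 : blockDiagonal' (fun i => if i ∈ (∅ : Finset (Fin k)) then D i else 0)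
          = (0 : Matrix _ _ ℂ) := by
        rw [show (fun i => if i ∈ (∅ : Finset (Fin k)) then D i else 0)
            = (0 : ∀ j, Matrix (Fin (n j)) (Fin (n j)) ℂ) from by funext i; simp]
        exact blockDiagonal'_zero
      rw [h0]
      simp
    | @insert a S' haS IH =>
      set M := C + blockDiagonal' (fun i => if i ∈ S' then D i else 0) with hMdef
      have hMpd : M.PosDef :=
        hC.add_posSemidef (matic_blockDiagonal'_posSemidef _ (fun j => by
          by_cases h : j ∈ S'
          · simpa [h] using (hD j).posSemidef
          · simp only [h, if_false]
            exact Matrix.PosSemidef.zero))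
      have hdiag : (matic_emb n a)ᴴ * M * matic_emb n a
          = C.submatrix (Sigma.mk a) (Sigma.mk a) := by
        rw [matic_emb_conj]
        ext u v
        simp only [hMdef, submatrix_apply, Matrix.add_apply]
        rw [blockDiagonal'_apply_eq]
        simp [haS]
      have hstep := matic_step_ineq hMpd (matic_emb n a) (matic_emb_orth a) (hD a)
      rw [hdiag] at hstep
      have hins : M + matic_emb n a * D a * (matic_emb n a)ᴴ
          = C + blockDiagonal' (fun i => if i ∈ insert a S' then D i else 0) := by
        rw [matic_emb_block]
        have hsplit : (fun i => if i ∈ insert a S' then D i else 0)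
            = (fun i => if i ∈ S' then D i else 0) + Pi.single a (D a) := by
          funext i
          by_cases hi : i = a
          · subst hi
            simp [haS]
          · simp [hi, Pi.single_eq_of_ne hi, Finset.mem_insert]
        rw [hsplit, blockDiagonal'_add, hMdef, add_assoc]
      rw [hins] at hstep
      calc (∏ j ∈ insert a S',
              (1 + (C.submatrix (Sigma.mk j) (Sigma.mk j))⁻¹ * D j).det) * C.det
          = (1 + (C.submatrix (Sigma.mk a) (Sigma.mk a))⁻¹ * D a).det
            * ((∏ j ∈ S', (1 + (C.submatrix (Sigma.mk j) (Sigma.mk j))⁻¹ * D j).det)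
              * C.det) := by
            rw [Finset.prod_insert haS, mul_assoc]
        _ ≤ (1 + (C.submatrix (Sigma.mk a) (Sigma.mk a))⁻¹ * D a).det * M.det :=
            mul_le_mul_of_nonneg_left IH (hdetpos a).le
        _ ≤ _ := hstep
  have hfin := claim Finset.univ
  have hEuniv : blockDiagonal' (fun i => if i ∈ (Finset.univ : Finset (Fin k)) then D i else 0)
      = blockDiagonal' D := by
    apply congrArg
    funext i
    simp
  rw [hEuniv] at hfin
  have h1 : (1 : Matrix ((j : Fin k) × Fin (n j)) ((j : Fin k) × Fin (n j)) ℂ)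
      + C⁻¹ * blockDiagonal' D = C⁻¹ * (C + blockDiagonal' D) := by
    rw [Matrix.mul_add, Matrix.nonsing_inv_mul _ hC.det_pos.ne'.isUnit]
  have hinvpos : (0:ℂ) < (C.det)⁻¹ := by
    have := hC.inv.det_pos
    rwa [det_nonsing_inv, Ring.inverse_eq_inv'] at this
  rw [h1, det_mul, det_nonsing_inv, Ring.inverse_eq_inv']
  calc (∏ j : Fin k, (1 + (C.submatrix (Sigma.mk j) (Sigma.mk j))⁻¹ * D j).det)
      = (∏ j : Fin k, (1 + (C.submatrix (Sigma.mk j) (Sigma.mk j))⁻¹ * D j).det)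
        * C.det * (C.det)⁻¹ := by
        rw [mul_assoc, mul_inv_cancel₀ hC.det_pos.ne', mul_one]
    _ ≤ (C + blockDiagonal' D).det * (C.det)⁻¹ :=
        mul_le_mul_of_nonneg_right hfin hinvpos.le
    _ = (C.det)⁻¹ * (C + blockDiagonal' D).det := mul_comm _ _
end

section
/- Let A₁, …, A_m ∈ ℙ_n and let n = n₁ + ⋯ + n_k; for each i partition A_i conformally and write A_i^{(j)} ∈ ℙ_{n_j} for the j-th diagonal block of A_i. Then det(Σ_{i=1}^m (A_i^{(1)})⁻¹) · det(Σ_{i=1}^m (A_i^{(2)})⁻¹) ⋯ det(Σ_{i=1}^m (A_i^{(k)})⁻¹) ≤ det(Σ_{i=1}^m A_i⁻¹). -/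
set_option maxHeartbeats 1000000

open Matrix
open scoped ComplexOrder

namespace ChoiAux

variable {n' : Type*} [Fintype n'] [DecidableEq n']

lemma posDef_submatrix {M : Matrix n' n' ℂ} (hM : M.PosDef) {m' : Type*} [Fintype m']
    [DecidableEq m'] {e : m' → n'} (he : Function.Injective e) :
    (M.submatrix e e).PosDef := by
  refine PosDef.of_dotProduct_mulVec_pos (hM.isHermitian.submatrix e) fun x hx => ?_
  set P : Matrix n' m' ℂ := (1 : Matrix n' n' ℂ).submatrix id e with hP
  have key : M.submatrix e e = Pᴴ * M * P := by
    ext a b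
    simp [hP, Matrix.mul_apply, Matrix.one_apply, Finset.sum_ite_eq, Finset.sum_ite_eq']
  have hPx : P *ᵥ x ≠ 0 := by
    intro h0
    apply hx
    funext a
    have h1 : (P *ᵥ x) (e a) = x a := by
      simp [hP, Matrix.mulVec, dotProduct, Matrix.one_apply, he.eq_iff,
        Finset.sum_ite_eq]
    rw [h0] at h1
    exact h1.symm
  rw [key]
  simpa only [star_mulVec, dotProduct_mulVec, vecMul_vecMul] using hM.dotProduct_mulVec_pos hPx

lemma posSemidef_sum {ι : Type*} (s : Finset ι) (f : ι → Matrix n' n' ℂ)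
    (h : ∀ i ∈ s, (f i).PosSemidef) : (∑ i ∈ s, f i).PosSemidef :=
  Finset.sum_induction f _ (fun _ _ ha hb => ha.add hb) Matrix.PosSemidef.zero h

lemma posDef_sum {m : ℕ} (hm : m ≠ 0) (f : Fin m → Matrix n' n' ℂ)
    (h : ∀ i, (f i).PosDef) : (∑ i, f i).PosDef := by
  haveI : NeZero m := ⟨hm⟩
  rw [← Finset.add_sum_erase _ f (Finset.mem_univ (0 : Fin m))]
  exact (h 0).add_posSemidef (posSemidef_sum _ _ fun i _ => (h i).posSemidef)

lemma det_le_det_add {P Q : Matrix n' n' ℂ} (hP : P.PosDef) (hQ : Q.PosSemidef) :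
    P.det ≤ (P + Q).det := by
  obtain ⟨S, hSh, hSS⟩ : ∃ S : Matrix n' n' ℂ, S.IsHermitian ∧ S * S = P := by
    open scoped MatrixOrder in
    exact ⟨CFC.sqrt P, (CFC.sqrt_nonneg P).posSemidef.1,
      CFC.sqrt_mul_sqrt_self P hP.posSemidef.nonneg⟩
  have hdS : S.det * S.det = P.det := by rw [← det_mul, hSS]
  have hSdet : IsUnit S.det := by
    rcases eq_or_ne S.det 0 with h | h
    · rw [h, mul_zero] at hdS
      exact absurd hdS.symm hP.det_pos.ne'
    · exact h.isUnit
  set R := S⁻¹ * Q * S⁻¹ with hR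
  have hSinvH : (S⁻¹).IsHermitian := hSh.inv
  have hRpsd : R.PosSemidef := by
    have := hQ.mul_mul_conjTranspose_same (S⁻¹)
    rwa [hSinvH.eq] at this
  have key : P + Q = S * (1 + R) * S := by
    rw [hR, Matrix.mul_add, Matrix.mul_one, Matrix.add_mul, hSS]
    congr 1
    have h1 : S * S⁻¹ = 1 := mul_nonsing_inv _ hSdet
    have h2 : S⁻¹ * S = 1 := nonsing_inv_mul _ hSdet
    refine Eq.symm ?_
    calc S * (S⁻¹ * Q * S⁻¹) * S = S * S⁻¹ * Q * (S⁻¹ * S) := by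
          simp only [Matrix.mul_assoc]
      _ = Q := by rw [h1, h2, Matrix.one_mul, Matrix.mul_one]
  -- spectral decomposition of R
  set ev := hRpsd.1.eigenvalues with hev
  set U : Matrix n' n' ℂ := (hRpsd.1.eigenvectorUnitary : Matrix n' n' ℂ) with hU
  have hUU : U * star U = 1 := Matrix.mem_unitaryGroup_iff.mp hRpsd.1.eigenvectorUnitary.2
  set D₀ : Matrix n' n' ℂ := 1 + diagonal (RCLike.ofReal ∘ ev) with hD₀
  have key2 : 1 + R = U * D₀ * star U := by
    rw [hD₀, Matrix.mul_add, Matrix.mul_one, Matrix.add_mul, hUU]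
    congr 1
    exact hRpsd.1.spectral_theorem
  have hdet1R : (1 + R).det = ∏ i, (1 + (RCLike.ofReal (ev i) : ℂ)) := by
    rw [key2, det_mul, det_mul]
    have h3 : U.det * D₀.det * (star U).det
        = D₀.det * (U.det * (star U).det) := by ring
    rw [h3, ← det_mul, hUU, det_one, mul_one, hD₀]
    rw [← Matrix.diagonal_one, Matrix.diagonal_add, Matrix.det_diagonal]
    simp
  have h1R : (1 : ℂ) ≤ (1 + R).det := by
    rw [hdet1R]
    calc (1 : ℂ) = ∏ _i : n', (1 : ℂ) := by rw [Finset.prod_const_one]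
      _ ≤ ∏ i, (1 + (RCLike.ofReal (ev i) : ℂ)) := by
          apply Finset.prod_le_prod
          · intro i _; exact zero_le_one
          · intro i _
            refine le_add_of_nonneg_right ?_
            rw [RCLike.ofReal_nonneg]
            exact hRpsd.eigenvalues_nonneg i
  calc P.det = P.det * 1 := (mul_one _).symm
    _ ≤ P.det * (1 + R).det := mul_le_mul_of_nonneg_left h1R hP.det_pos.le
    _ = S.det * (1 + R).det * S.det := by rw [← hdS]; ring
    _ = (P + Q).det := by rw [key, det_mul, det_mul]

lemma det_le_det_of_le {P Q : Matrix n' n' ℂ} (hP : P.PosDef)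
    (h : (Q - P).PosSemidef) : P.det ≤ Q.det := by
  have := det_le_det_add hP h
  rwa [show P + (Q - P) = Q from by abel] at this

lemma inv_le_inv_of_le {P Q : Matrix n' n' ℂ} (hP : P.PosDef) (hQ : Q.PosDef)
    (h : (Q - P).PosSemidef) : (P⁻¹ - Q⁻¹).PosSemidef := by
  haveI : Invertible Q := Q.invertibleOfIsUnitDet hQ.det_pos.ne'.isUnit
  haveI : Invertible (P⁻¹) := (P⁻¹).invertibleOfIsUnitDet hP.inv.det_pos.ne'.isUnit
  have h2 : (fromBlocks Q 1 (1 : Matrix n' n' ℂ)ᴴ P⁻¹).PosSemidef := by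
    rw [Matrix.PosDef.fromBlocks₂₂ Q 1 hP.inv]
    rw [Matrix.nonsing_inv_nonsing_inv P hP.det_pos.ne'.isUnit]
    simpa using h
  have h1 := (Matrix.PosDef.fromBlocks₁₁ (1 : Matrix n' n' ℂ) (P⁻¹) hQ).mp h2
  simpa using h1

section Blocks

variable {l r : Type*} [Fintype l] [Fintype r] [DecidableEq l] [DecidableEq r]

lemma fromBlocks_sub' (A₁ : Matrix l l ℂ) (B₁ : Matrix l r ℂ) (C₁ : Matrix r l ℂ)
    (D₁ : Matrix r r ℂ) (A₂ : Matrix l l ℂ) (B₂ : Matrix l r ℂ) (C₂ : Matrix r l ℂ)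
    (D₂ : Matrix r r ℂ) :
    fromBlocks A₁ B₁ C₁ D₁ - fromBlocks A₂ B₂ C₂ D₂
      = fromBlocks (A₁ - A₂) (B₁ - B₂) (C₁ - C₂) (D₁ - D₂) := by
  ext (i | i) (j | j) <;> simp

lemma sum_fromBlocks {ι : Type*} (s : Finset ι) (f : ι → Matrix l l ℂ) (g : ι → Matrix l r ℂ)
    (h : ι → Matrix r l ℂ) (k : ι → Matrix r r ℂ) :
    ∑ i ∈ s, fromBlocks (f i) (g i) (h i) (k i)
      = fromBlocks (∑ i ∈ s, f i) (∑ i ∈ s, g i) (∑ i ∈ s, h i) (∑ i ∈ s, k i) := by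
  ext (a | a) (b | b) <;> simp [Matrix.sum_apply]

lemma toBlocks₂₂_sum {ι : Type*} (s : Finset ι) (f : ι → Matrix (l ⊕ r) (l ⊕ r) ℂ) :
    (∑ i ∈ s, f i).toBlocks₂₂ = ∑ i ∈ s, (f i).toBlocks₂₂ := by
  ext a b
  simp [Matrix.toBlocks₂₂, Matrix.sum_apply]

lemma toBlocks₂₁_eq {M : Matrix (l ⊕ r) (l ⊕ r) ℂ} (hM : M.IsHermitian) :
    M.toBlocks₂₁ = (M.toBlocks₁₂)ᴴ := by
  ext a b
  have := congrFun (congrFun hM (Sum.inr a)) (Sum.inl b)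
  rw [Matrix.conjTranspose_apply] at this
  simpa [Matrix.toBlocks₂₁, Matrix.toBlocks₁₂, Matrix.conjTranspose_apply] using this.symm

/-- The Schur complement of the top-left block. -/
noncomputable def schurC (M : Matrix (l ⊕ r) (l ⊕ r) ℂ) : Matrix r r ℂ :=
  M.toBlocks₂₂ - M.toBlocks₂₁ * (M.toBlocks₁₁)⁻¹ * M.toBlocks₁₂

lemma schurC_def (M : Matrix (l ⊕ r) (l ⊕ r) ℂ) :
    schurC M = M.toBlocks₂₂ - M.toBlocks₂₁ * (M.toBlocks₁₁)⁻¹ * M.toBlocks₁₂ := rfl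

variable {M : Matrix (l ⊕ r) (l ⊕ r) ℂ}

lemma toBlocks₁₁_posDef (hM : M.PosDef) : (M.toBlocks₁₁).PosDef :=
  posDef_submatrix hM Sum.inl_injective

lemma toBlocks₂₂_posDef (hM : M.PosDef) : (M.toBlocks₂₂).PosDef :=
  posDef_submatrix hM Sum.inr_injective

lemma fromBlocks_eq (hM : M.IsHermitian) :
    M = fromBlocks M.toBlocks₁₁ M.toBlocks₁₂ (M.toBlocks₁₂)ᴴ M.toBlocks₂₂ := by
  rw [← toBlocks₂₁_eq hM, fromBlocks_toBlocks]

lemma schurC_posDef (hM : M.PosDef) : (schurC M).PosDef := by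
  have hA : (M.toBlocks₁₁).PosDef := toBlocks₁₁_posDef hM
  haveI : Invertible (M.toBlocks₁₁) :=
    (M.toBlocks₁₁).invertibleOfIsUnitDet hA.det_pos.ne'.isUnit
  refine PosDef.of_dotProduct_mulVec_pos ?_ ?_
  · rw [schurC_def, toBlocks₂₁_eq hM.1]
    exact ((toBlocks₂₂_posDef hM).1).sub
      (isHermitian_conjTranspose_mul_mul _ hA.1.inv)
  · intro x hx
    have hN : (fromBlocks M.toBlocks₁₁ M.toBlocks₁₂ (M.toBlocks₁₂)ᴴ M.toBlocks₂₂).PosDef := by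
      rw [← fromBlocks_eq hM.1]; exact hM
    have hvec : (-((((M.toBlocks₁₁)⁻¹ * M.toBlocks₁₂)) *ᵥ x) ⊕ᵥ x) ≠ 0 := by
      intro h0
      apply hx
      funext a
      exact congrFun h0 (Sum.inr a)
    have hq := hN.dotProduct_mulVec_pos hvec
    rw [dotProduct_mulVec,
      schur_complement_eq₁₁ M.toBlocks₁₂ M.toBlocks₂₂ _ _ hA.1, neg_add_cancel,
      dotProduct_zero, zero_add] at hq
    have hsc : schurC M = M.toBlocks₂₂ - (M.toBlocks₁₂)ᴴ * (M.toBlocks₁₁)⁻¹ * M.toBlocks₁₂ := by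
      rw [schurC_def, toBlocks₂₁_eq hM.1]
    rw [hsc, dotProduct_mulVec]
    exact hq

lemma toBlocks₂₂_sub_schurC (hM : M.PosDef) : (M.toBlocks₂₂ - schurC M).PosSemidef := by
  have hA : (M.toBlocks₁₁).PosDef := toBlocks₁₁_posDef hM
  have : M.toBlocks₂₂ - schurC M
      = (M.toBlocks₁₂)ᴴ * (M.toBlocks₁₁)⁻¹ * ((M.toBlocks₁₂)ᴴ)ᴴ := by
    rw [schurC_def, sub_sub_cancel, toBlocks₂₁_eq hM.1, conjTranspose_conjTranspose]
  rw [this]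
  exact hA.inv.posSemidef.mul_mul_conjTranspose_same _

lemma inv_eq_fromBlocks (hM : M.PosDef) :
    M⁻¹ = fromBlocks
      ((M.toBlocks₁₁)⁻¹ + (M.toBlocks₁₁)⁻¹ * M.toBlocks₁₂ * (schurC M)⁻¹ *
        (M.toBlocks₁₂)ᴴ * (M.toBlocks₁₁)⁻¹)
      (-((M.toBlocks₁₁)⁻¹ * M.toBlocks₁₂ * (schurC M)⁻¹))
      (-((schurC M)⁻¹ * (M.toBlocks₁₂)ᴴ * (M.toBlocks₁₁)⁻¹))
      ((schurC M)⁻¹) := by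
  set A := M.toBlocks₁₁ with hAdef
  set B := M.toBlocks₁₂ with hBdef
  set D := M.toBlocks₂₂ with hDdef
  have hA : A.PosDef := toBlocks₁₁_posDef hM
  haveI iA : Invertible A := A.invertibleOfIsUnitDet hA.det_pos.ne'.isUnit
  have hAinv : ⅟A = A⁻¹ := invOf_eq_nonsing_inv A
  have hT : (schurC M).PosDef := schurC_posDef hM
  have hTT : D - Bᴴ * ⅟A * B = schurC M := by
    rw [hAinv, schurC, toBlocks₂₁_eq hM.1]
  haveI iT : Invertible (D - Bᴴ * ⅟A * B) :=
    hTT ▸ ((schurC M).invertibleOfIsUnitDet hT.det_pos.ne'.isUnit)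
  haveI iM : Invertible M := M.invertibleOfIsUnitDet hM.det_pos.ne'.isUnit
  haveI iM' : Invertible (fromBlocks A B Bᴴ D) := (fromBlocks_eq hM.1) ▸ iM
  have h2 : ⅟(D - Bᴴ * ⅟A * B) = (schurC M)⁻¹ := by
    rw [invOf_eq_nonsing_inv, hTT]
  have h := invOf_fromBlocks₁₁_eq A B Bᴴ D
  have hMinv : M⁻¹ = ⅟(fromBlocks A B Bᴴ D) :=
    calc M⁻¹ = (fromBlocks A B Bᴴ D)⁻¹ := by rw [← fromBlocks_eq hM.1]
      _ = ⅟(fromBlocks A B Bᴴ D) := (invOf_eq_nonsing_inv _).symm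
  rw [hMinv, h, h2, hAinv]

lemma inv_toBlocks₂₂ (hM : M.PosDef) : (M⁻¹).toBlocks₂₂ = (schurC M)⁻¹ := by
  rw [inv_eq_fromBlocks hM]
  rfl

lemma inv_sub_fromBlocks (hM : M.PosDef) :
    (M⁻¹ - fromBlocks (M.toBlocks₁₁)⁻¹ 0 0 0).PosSemidef := by
  set A := M.toBlocks₁₁ with hAdef
  set B := M.toBlocks₁₂ with hBdef
  have hA : A.PosDef := toBlocks₁₁_posDef hM
  have hT : (schurC M).PosDef := schurC_posDef hM
  have hAinvH : (A⁻¹).IsHermitian := hA.1.inv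
  have hTinvH : ((schurC M)⁻¹).IsHermitian := hT.1.inv
  have diff_eq : M⁻¹ - fromBlocks A⁻¹ 0 0 0
      = (fromRows (A⁻¹ * B) (-1)) * (schurC M)⁻¹ * (fromRows (A⁻¹ * B) (-1))ᴴ := by
    rw [inv_eq_fromBlocks hM, fromBlocks_sub',
      conjTranspose_fromRows_eq_fromCols_conjTranspose, fromRows_mul,
      fromRows_mul_fromCols]
    refine fromBlocks_inj.mpr ⟨?_, ?_, ?_, ?_⟩
    · rw [add_sub_cancel_left, conjTranspose_mul, hAinvH.eq]
      simp only [Matrix.mul_assoc]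
      rfl
    · rw [sub_zero, conjTranspose_neg, conjTranspose_one, Matrix.mul_neg, Matrix.mul_one]
    · rw [sub_zero, conjTranspose_mul, hAinvH.eq]
      simp [Matrix.neg_mul, Matrix.mul_assoc]
      rfl
    · simp
  rw [diff_eq]
  exact hT.inv.posSemidef.mul_mul_conjTranspose_same _

lemma schur_ge (hM : M.PosDef) {F : Matrix l l ℂ}
    (h : (M - fromBlocks F 0 0 0).PosSemidef) :
    (M.toBlocks₁₁ - M.toBlocks₁₂ * (M.toBlocks₂₂)⁻¹ * M.toBlocks₂₁ - F).PosSemidef := by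
  have hD : (M.toBlocks₂₂).PosDef := toBlocks₂₂_posDef hM
  haveI : Invertible (M.toBlocks₂₂) :=
    (M.toBlocks₂₂).invertibleOfIsUnitDet hD.det_pos.ne'.isUnit
  have hsub : M - fromBlocks F 0 0 0
      = fromBlocks (M.toBlocks₁₁ - F) M.toBlocks₁₂ (M.toBlocks₁₂)ᴴ M.toBlocks₂₂ := by
    conv_lhs => rw [fromBlocks_eq hM.1]
    rw [fromBlocks_sub']
    simp
  rw [hsub] at h
  have := (Matrix.PosDef.fromBlocks₂₂ (M.toBlocks₁₁ - F) M.toBlocks₁₂ hD).mp h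
  rw [toBlocks₂₁_eq hM.1, sub_right_comm]
  exact this

lemma twoBlock {m : ℕ} (hm : m ≠ 0) (C : Fin m → Matrix (l ⊕ r) (l ⊕ r) ℂ)
    (hC : ∀ i, (C i).PosDef) :
    (∑ i, ((C i).toBlocks₁₁)⁻¹).det * (∑ i, (schurC (C i))⁻¹).det
      ≤ (∑ i, (C i)⁻¹).det := by
  set M : Matrix (l ⊕ r) (l ⊕ r) ℂ := ∑ i, (C i)⁻¹ with hMdef
  have hMpd : M.PosDef := posDef_sum hm _ fun i => (hC i).inv
  set F : Matrix l l ℂ := ∑ i, ((C i).toBlocks₁₁)⁻¹ with hFdef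
  have hF : F.PosDef := posDef_sum hm _ fun i => (toBlocks₁₁_posDef (hC i)).inv
  set G : Matrix r r ℂ := ∑ i, (schurC (C i))⁻¹ with hGdef
  have hG : G.PosDef := posDef_sum hm _ fun i => (schurC_posDef (hC i)).inv
  -- M₂₂ = G
  have hM22 : M.toBlocks₂₂ = G := by
    rw [hMdef, toBlocks₂₂_sum, hGdef]
    exact Finset.sum_congr rfl fun i _ => inv_toBlocks₂₂ (hC i)
  have hG' : (M.toBlocks₂₂).PosDef := hM22 ▸ hG
  haveI : Invertible (M.toBlocks₂₂) :=
    (M.toBlocks₂₂).invertibleOfIsUnitDet hG'.det_pos.ne'.isUnit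
  -- M ≥ diag(F,0)
  have hdiff : (M - fromBlocks F 0 0 0).PosSemidef := by
    have heq : M - fromBlocks F 0 0 0
        = ∑ i, ((C i)⁻¹ - fromBlocks (((C i).toBlocks₁₁)⁻¹) 0 0 0) := by
      rw [Finset.sum_sub_distrib, ← hMdef, sum_fromBlocks]
      simp [hFdef]
    rw [heq]
    exact posSemidef_sum _ _ fun i _ => inv_sub_fromBlocks (hC i)
  have hschur := schur_ge hMpd hdiff
  -- determinant expansion
  have hdet : M.det = (M.toBlocks₂₂).det
      * (M.toBlocks₁₁ - M.toBlocks₁₂ * ⅟(M.toBlocks₂₂) * M.toBlocks₂₁).det := by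
    conv_lhs => rw [← fromBlocks_toBlocks M]
    exact det_fromBlocks₂₂ _ _ _ _
  rw [invOf_eq_nonsing_inv] at hdet
  have hFle : F.det ≤ (M.toBlocks₁₁ - M.toBlocks₁₂ * (M.toBlocks₂₂)⁻¹ * M.toBlocks₂₁).det :=
    det_le_det_of_le hF hschur
  calc F.det * G.det = G.det * F.det := mul_comm _ _
    _ ≤ G.det * (M.toBlocks₁₁ - M.toBlocks₁₂ * (M.toBlocks₂₂)⁻¹ * M.toBlocks₂₁).det :=
        mul_le_mul_of_nonneg_left hFle hG.det_pos.le
    _ = M.det := by rw [hdet, hM22]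

end Blocks

/-- Splitting off the first block of a sigma type over `Fin (k+1)`. -/
def sigmaSuccEquiv (k : ℕ) (n : Fin (k + 1) → ℕ) :
    ((j : Fin (k + 1)) × Fin (n j)) ≃ (Fin (n 0) ⊕ ((j : Fin k) × Fin (n j.succ))) where
  toFun x := Fin.cases (motive := fun j => Fin (n j) →
      Fin (n 0) ⊕ ((j : Fin k) × Fin (n j.succ)))
    (fun y => Sum.inl y) (fun j y => Sum.inr ⟨j, y⟩) x.1 x.2
  invFun s := Sum.elim (fun y => ⟨0, y⟩) (fun p => ⟨p.1.succ, p.2⟩) s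
  left_inv := by
    rintro ⟨j, y⟩
    induction j using Fin.cases with
    | zero => simp
    | succ j => simp
  right_inv := by rintro (y | ⟨j, y⟩) <;> simp

theorem choi_aux (k : ℕ) : ∀ (n : Fin k → ℕ) (m : ℕ), m ≠ 0 →
    ∀ (A : Fin m → Matrix ((j : Fin k) × Fin (n j)) ((j : Fin k) × Fin (n j)) ℂ),
    (∀ i, (A i).PosDef) →
    ∏ j : Fin k, (∑ i : Fin m, ((A i).submatrix (Sigma.mk j) (Sigma.mk j))⁻¹).det ≤
      (∑ i : Fin m, (A i)⁻¹).det := by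
  induction k with
  | zero =>
    intro n m hm A hA
    haveI : IsEmpty ((j : Fin 0) × Fin (n j)) := ⟨fun x => x.1.elim0⟩
    simp [Matrix.det_isEmpty]
  | succ k ih =>
    intro n m hm A hA
    set e := sigmaSuccEquiv k n with hedef
    set B : Fin m → Matrix (Fin (n 0) ⊕ ((j : Fin k) × Fin (n j.succ)))
        (Fin (n 0) ⊕ ((j : Fin k) × Fin (n j.succ))) ℂ :=
      fun i => (A i).submatrix e.symm e.symm with hBdef
    have hB : ∀ i, (B i).PosDef := fun i => posDef_submatrix (hA i) e.symm.injective
    have hdet : (∑ i, (A i)⁻¹).det = (∑ i, (B i)⁻¹).det := by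
      have hsum : ∑ i, (B i)⁻¹ = (∑ i, (A i)⁻¹).submatrix e.symm e.symm := by
        have : ∀ i, (B i)⁻¹ = ((A i)⁻¹).submatrix e.symm e.symm := fun i =>
          Matrix.inv_submatrix_equiv (A i) e.symm e.symm
        rw [Finset.sum_congr rfl fun i _ => this i]
        ext a b
        simp [Matrix.sum_apply]
      rw [hsum, Matrix.det_submatrix_equiv_self]
    rw [hdet]
    -- identify the first block
    have hB11 : ∀ i, (B i).toBlocks₁₁ = (A i).submatrix (Sigma.mk 0) (Sigma.mk 0) :=
      fun i => rfl
    -- Schur complements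
    set T : Fin m → Matrix ((j : Fin k) × Fin (n j.succ)) ((j : Fin k) × Fin (n j.succ)) ℂ :=
      fun i => schurC (B i) with hTdef
    have hT : ∀ i, (T i).PosDef := fun i => schurC_posDef (hB i)
    have ih' := ih (fun j => n j.succ) m hm T hT
    -- per-block comparison
    have hblock : ∀ j : Fin k,
        (∑ i, ((A i).submatrix (Sigma.mk j.succ) (Sigma.mk j.succ))⁻¹).det
          ≤ (∑ i, ((T i).submatrix (Sigma.mk j) (Sigma.mk j))⁻¹).det := by
      intro j
      apply det_le_det_of_le
        (posDef_sum hm _ fun i => (posDef_submatrix (hA i) sigma_mk_injective).inv)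
      rw [← Finset.sum_sub_distrib]
      apply posSemidef_sum
      intro i _
      have hA22 : ((B i).toBlocks₂₂).submatrix (Sigma.mk j) (Sigma.mk j)
          = (A i).submatrix (Sigma.mk j.succ) (Sigma.mk j.succ) := rfl
      have hps : (((B i).toBlocks₂₂ - T i).submatrix (Sigma.mk j) (Sigma.mk j)).PosSemidef :=
        (toBlocks₂₂_sub_schurC (hB i)).submatrix _
      have hps' : ((A i).submatrix (Sigma.mk j.succ) (Sigma.mk j.succ)
          - (T i).submatrix (Sigma.mk j) (Sigma.mk j)).PosSemidef := by
        have : ((B i).toBlocks₂₂ - T i).submatrix (Sigma.mk j) (Sigma.mk j)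
            = (A i).submatrix (Sigma.mk j.succ) (Sigma.mk j.succ)
              - (T i).submatrix (Sigma.mk j) (Sigma.mk j) := by
          rw [← hA22]
          ext a b
          simp
        rwa [this] at hps
      exact inv_le_inv_of_le (posDef_submatrix (hT i) sigma_mk_injective)
        (posDef_submatrix (hA i) sigma_mk_injective) hps'
    -- assemble
    rw [Fin.prod_univ_succ]
    have h2 := twoBlock hm B hB
    simp only [hB11] at h2
    have hprod : ∏ j : Fin k,
        (∑ i, ((A i).submatrix (Sigma.mk j.succ) (Sigma.mk j.succ))⁻¹).det
        ≤ ∏ j : Fin k, (∑ i, ((T i).submatrix (Sigma.mk j) (Sigma.mk j))⁻¹).det := by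
      apply Finset.prod_le_prod
      · intro j _
        exact (posDef_sum hm _ fun i => (posDef_submatrix (hA i) sigma_mk_injective).inv).det_pos.le
      · intro j _
        exact hblock j
    have hdet0 : (0 : ℂ) ≤ (∑ i, ((A i).submatrix (Sigma.mk 0) (Sigma.mk 0))⁻¹).det :=
      (posDef_sum hm _ fun i => (posDef_submatrix (hA i) sigma_mk_injective).inv).det_pos.le
    calc (∑ i, ((A i).submatrix (Sigma.mk 0) (Sigma.mk 0))⁻¹).det
          * ∏ j : Fin k, (∑ i, ((A i).submatrix (Sigma.mk j.succ) (Sigma.mk j.succ))⁻¹).det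
        ≤ (∑ i, ((A i).submatrix (Sigma.mk 0) (Sigma.mk 0))⁻¹).det
          * ∏ j : Fin k, (∑ i, ((T i).submatrix (Sigma.mk j) (Sigma.mk j))⁻¹).det :=
          mul_le_mul_of_nonneg_left hprod hdet0
      _ ≤ (∑ i, ((A i).submatrix (Sigma.mk 0) (Sigma.mk 0))⁻¹).det
          * (∑ i, (T i)⁻¹).det := mul_le_mul_of_nonneg_left ih' hdet0
      _ ≤ (∑ i, (B i)⁻¹).det := h2

end ChoiAux

/-- **Choi's determinantal inequality.**
Let `A₁, …, A_m` be `n × n` complex positive definite matrices, where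
`n = n₁ + ⋯ + n_k` (the index set is encoded as the sigma type
`(j : Fin k) × Fin (n j)`), and let `(A i).submatrix (Sigma.mk j) (Sigma.mk j)`
be the `j`-th diagonal block `A_i^{(j)}` of `A_i` in the conformal partition.
Then `∏ⱼ det(Σᵢ (A_i^{(j)})⁻¹) ≤ det(Σᵢ A_i⁻¹)`. -/
theorem choi_determinantal_inequality (k m : ℕ) (n : Fin k → ℕ)
    (A : Fin m → Matrix ((j : Fin k) × Fin (n j)) ((j : Fin k) × Fin (n j)) ℂ)
    (hA : ∀ i, (A i).PosDef) :
    ∏ j : Fin k, (∑ i : Fin m, ((A i).submatrix (Sigma.mk j) (Sigma.mk j))⁻¹).det ≤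
      (∑ i : Fin m, (A i)⁻¹).det := by
  rcases eq_or_ne m 0 with rfl | hm
  · simp only [Finset.univ_eq_empty, Finset.sum_empty]
    by_cases hne : Nonempty ((j : Fin k) × Fin (n j))
    · obtain ⟨⟨j₀, a⟩⟩ := hne
      rw [haveI : Nonempty ((j : Fin k) × Fin (n j)) := ⟨⟨j₀, a⟩⟩; Matrix.det_zero]
      rw [Finset.prod_eq_zero (Finset.mem_univ j₀) (haveI : Nonempty (Fin (n j₀)) := ⟨a⟩; Matrix.det_zero)]
    · haveI : IsEmpty ((j : Fin k) × Fin (n j)) := not_nonempty_iff.mp hne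
      have hj : ∀ j : Fin k, IsEmpty (Fin (n j)) := fun j => ⟨fun a => hne ⟨⟨j, a⟩⟩⟩
      rw [Matrix.det_isEmpty]
      have : ∀ j : Fin k, (0 : Matrix (Fin (n j)) (Fin (n j)) ℂ).det = 1 := fun j =>
        haveI := hj j
        Matrix.det_isEmpty
      rw [Finset.prod_congr rfl fun j _ => this j, Finset.prod_const_one]
  · exact ChoiAux.choi_aux k n m hm A hA
end

section
/- Let n = n₁ + ⋯ + n_k, let C ∈ ℙ_n, let C_j ∈ ℙ_{n_j} be the j-th diagonal block of C in the conformal partition, and let p > 0. Then the vector of eigenvalues of the block diagonal positive definite matrix C₁^{-p} ⊕ ⋯ ⊕ C_k^{-p} is weakly majorized by the vector of eigenvalues of C^{-p}. -/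
open Matrix
open scoped ComplexOrder

/-- The real power `A^p` of a Hermitian matrix `A`, defined by the spectral theorem:
if `A = U (diag λ) U*` with `U` the unitary of eigenvectors, then
`A^p = U (diag λ^p) U*`. -/
noncomputable def IsHermitian.rpow {m : Type*} [Fintype m] [DecidableEq m]
    {A : Matrix m m ℂ} (hA : A.IsHermitian) (p : ℝ) : Matrix m m ℂ :=
  (hA.eigenvectorUnitary : Matrix m m ℂ) *
    Matrix.diagonal (fun i => ((hA.eigenvalues i ^ p : ℝ) : ℂ)) *
    star (hA.eigenvectorUnitary : Matrix m m ℂ)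

/-- The sum of the `r` largest entries of a real vector. -/
noncomputable def sumLargest {ι : Type*} [Fintype ι] (x : ι → ℝ) (r : ℕ) : ℝ :=
  ((((Finset.univ.val.map x).sort (· ≤ ·)).reverse).take r).sum

/-- `x ≺_w y` : for each `r`, the sum of the `r` largest entries of `x` is at most the
sum of the `r` largest entries of `y`. -/
def WeaklyMajorizedBy {ι : Type*} [Fintype ι] (x y : ι → ℝ) : Prop :=
  ∀ r : ℕ, sumLargest x r ≤ sumLargest y r

section Auxiliary

open Polynomial

/-! ### Convexity of `x ↦ x ^ (-p)` on `(0, ∞)` -/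

lemma convexOn_rpow_neg {p : ℝ} (hp : 0 < p) :
    ConvexOn ℝ (Set.Ioi (0:ℝ)) (fun x : ℝ => x ^ (-p)) := by
  have h1 : ConvexOn ℝ (Set.Ioi (0:ℝ)) (fun x : ℝ => -(p * Real.log x)) := by
    have h0 := strictConcaveOn_log_Ioi.concaveOn
    have h1 : ConvexOn ℝ (Set.Ioi (0:ℝ)) (-fun x : ℝ => p * Real.log x) :=
      neg_convexOn_iff.mpr (by simpa [smul_eq_mul] using h0.smul (le_of_lt hp))
    simpa [Pi.neg_def] using h1
  have himg : ConvexOn ℝ ((fun x : ℝ => -(p * Real.log x)) '' Set.Ioi 0) Real.exp :=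
    convexOn_exp.subset (Set.subset_univ _) (by
      have : (fun x : ℝ => -(p * Real.log x)) '' Set.Ioi 0 = Set.univ := by
        apply Set.eq_univ_of_forall
        intro y
        exact ⟨Real.exp (-(y / p)), Set.mem_Ioi.2 (Real.exp_pos _), by
          simp [Real.log_exp]; field_simp⟩
      rw [this]; exact convex_univ)
  have hcomp : ConvexOn ℝ (Set.Ioi (0:ℝ)) (Real.exp ∘ fun x : ℝ => -(p * Real.log x)) :=
    himg.comp h1 ((Real.exp_monotone).monotoneOn _)
  have key : ∀ x ∈ Set.Ioi (0:ℝ), x ^ (-p) = Real.exp (-(p * Real.log x)) := by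
    intro x hx
    rw [Real.rpow_def_of_pos hx]
    ring_nf
  refine ⟨convex_Ioi 0, fun x hx y hy a b ha hb hab => ?_⟩
  have hmem : a • x + b • y ∈ Set.Ioi (0:ℝ) := (convex_Ioi 0) hx hy ha hb hab
  simp only []
  rw [key _ hmem, key _ hx, key _ hy]
  exact hcomp.2 hx hy ha hb hab

/-! ### `sumLargest` machinery -/

lemma sumLargest_congr {ι κ : Type*} [Fintype ι] [Fintype κ] {x : ι → ℝ} {y : κ → ℝ}
    (h : Finset.univ.val.map x = Finset.univ.val.map y) (r : ℕ) :
    sumLargest x r = sumLargest y r := by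
  unfold sumLargest; rw [h]

lemma sort_ofFn_monotone {N : ℕ} (y : Fin N → ℝ) (hy : Monotone y) :
    ((Finset.univ.val.map y).sort (· ≤ ·)) = List.ofFn y := by
  apply List.Perm.eq_of_pairwise' (Multiset.pairwise_sort _ _) hy.sortedLE_ofFn.pairwise ?_
  rw [← Multiset.coe_eq_coe, Multiset.sort_eq]
  rw [List.ofFn_eq_map]
  rfl

lemma sumLargest_monotone_eq {N : ℕ} (y : Fin N → ℝ) (hy : Monotone y) (r : ℕ) :
    sumLargest y r = ∑ j ∈ Finset.univ.filter (fun j : Fin N => N - r ≤ (j : ℕ)), y j := by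
  unfold sumLargest
  rw [sort_ofFn_monotone y hy, List.take_reverse, List.sum_reverse]
  have hlen : (List.ofFn y).length = N := List.length_ofFn
  rw [hlen]
  have hsplit : ((List.ofFn y).take (N - r)).sum + ((List.ofFn y).drop (N - r)).sum
      = (List.ofFn y).sum := by
    rw [← List.sum_append, List.take_append_drop]
  have h1 : ((List.ofFn y).take (N - r)).sum
      = ∑ j ∈ Finset.univ.filter (fun j : Fin N => (j : ℕ) < N - r), y j :=
    List.sum_take_ofFn y (N - r)
  have h2 : (List.ofFn y).sum = ∑ j, y j := List.sum_ofFn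
  have h3 : (∑ j ∈ Finset.univ.filter (fun j : Fin N => (j : ℕ) < N - r), y j)
      + (∑ j ∈ Finset.univ.filter (fun j : Fin N => ¬ ((j : ℕ) < N - r)), y j) = ∑ j, y j :=
    Finset.sum_filter_add_sum_filter_not _ _ _
  have h4 : (Finset.univ.filter (fun j : Fin N => ¬ ((j : ℕ) < N - r)))
      = (Finset.univ.filter (fun j : Fin N => N - r ≤ (j : ℕ))) := by
    apply Finset.filter_congr; intro j _; simp [not_lt]
  rw [h4] at h3
  linarith

lemma map_univ_equiv_val {ι : Type*} [Fintype ι] {N : ℕ} (σ : Fin N ≃ ι) (x : ι → ℝ) :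
    Finset.univ.val.map (x ∘ σ) = Finset.univ.val.map x := by
  have h : (Finset.univ : Finset (Fin N)).val.map σ = (Finset.univ : Finset ι).val := by
    have := Finset.map_univ_equiv σ
    rw [← this]
    rfl
  rw [← h, Multiset.map_map]

lemma exists_monotone_equiv {ι : Type*} [Fintype ι] (x : ι → ℝ) :
    ∃ σ : Fin (Fintype.card ι) ≃ ι, Monotone (x ∘ σ) := by
  let e := (Fintype.equivFin ι).symm
  exact ⟨((Tuple.sort (x ∘ e) : Equiv.Perm _)).trans e, Tuple.monotone_sort (x ∘ e)⟩

lemma card_filter_ge {N r : ℕ} (h : r ≤ N) :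
    (Finset.univ.filter (fun j : Fin N => N - r ≤ (j : ℕ))).card = r := by
  have hcb := Finset.card_bij' (s := Finset.univ.filter (fun j : Fin N => N - r ≤ (j : ℕ)))
    (t := Finset.Ico (N - r) N) (fun j _ => (j : ℕ))
    (fun a ha => ⟨a, (Finset.mem_Ico.mp ha).2⟩)
    (by intro a ha
        simp only [Finset.mem_filter, Finset.mem_univ, true_and] at ha
        simp only [Finset.mem_Ico]
        exact ⟨ha, a.isLt⟩)
    (by intro a ha
        simp only [Finset.mem_filter, Finset.mem_univ, true_and]
        exact (Finset.mem_Ico.mp ha).1)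
    (by intro a _; rfl) (by intro a _; rfl)
  rw [hcb, Nat.card_Ico]
  omega

lemma sumLargest_mono_r {ι : Type*} [Fintype ι] (x : ι → ℝ) (hx : ∀ i, 0 ≤ x i)
    {r r' : ℕ} (h : r ≤ r') : sumLargest x r ≤ sumLargest x r' := by
  obtain ⟨σ, hσ⟩ := exists_monotone_equiv x
  rw [← sumLargest_congr (map_univ_equiv_val σ x) r, ← sumLargest_congr (map_univ_equiv_val σ x) r',
    sumLargest_monotone_eq _ hσ, sumLargest_monotone_eq _ hσ]
  apply Finset.sum_le_sum_of_subset_of_nonneg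
  · apply Finset.monotone_filter_right
    intro j hj
    omega
  · intro i _ _
    exact hx _

lemma sumLargest_min {ι : Type*} [Fintype ι] (x : ι → ℝ) (r : ℕ) :
    sumLargest x r = sumLargest x (min r (Fintype.card ι)) := by
  unfold sumLargest
  congr 1
  have hL : (((Finset.univ.val.map x).sort (· ≤ ·)).reverse).length = Fintype.card ι := by
    rw [List.length_reverse, Multiset.length_sort, Multiset.card_map]
    rfl
  rcases le_total r (Fintype.card ι) with hr | hr
  · rw [min_eq_left hr]
  · rw [min_eq_right hr, List.take_of_length_le (by omega), List.take_of_length_le (by omega)]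

lemma sum_mul_le_sumLargest {ι : Type*} [Fintype ι] (x T : ι → ℝ)
    (hT0 : ∀ i, 0 ≤ T i) (hT1 : ∀ i, T i ≤ 1) (m : ℕ) (hm : m ≤ Fintype.card ι)
    (hsum : ∑ i, T i = m) :
    ∑ i, x i * T i ≤ sumLargest x m := by
  obtain ⟨σ, hσ⟩ := exists_monotone_equiv x
  rw [← sumLargest_congr (map_univ_equiv_val σ x) m, sumLargest_monotone_eq _ hσ]
  rw [← Equiv.sum_comp σ (fun i => x i * T i)]
  rcases Nat.eq_zero_or_pos m with hm0 | hm0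
  · subst hm0
    have hT : ∀ i, T i = 0 := fun i =>
      (Finset.sum_eq_zero_iff_of_nonneg (fun i _ => hT0 i)).mp (by rw [hsum]; norm_num) i
        (Finset.mem_univ i)
    simp only [Function.comp_apply, hT, mul_zero, Finset.sum_const_zero]
    apply Finset.sum_nonneg
    intro j hj
    rw [Finset.mem_filter] at hj
    omega
  · have hNpos : 0 < Fintype.card ι := lt_of_lt_of_le hm0 hm
    have hlt : Fintype.card ι - m < Fintype.card ι := by omega
    set τ : ℝ := (x ∘ σ) ⟨Fintype.card ι - m, hlt⟩ with hτ
    set S : Finset (Fin (Fintype.card ι)) :=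
      Finset.univ.filter (fun j => Fintype.card ι - m ≤ (j : ℕ)) with hS
    have hcard : S.card = m := card_filter_ge hm
    have hyS : ∀ j ∈ S, τ ≤ (x ∘ σ) j := by
      intro j hj
      rw [hS, Finset.mem_filter] at hj
      rw [hτ]
      refine hσ ?_
      rw [Fin.le_def]
      exact hj.2
    have hySc : ∀ j ∈ Finset.univ \ S, (x ∘ σ) j ≤ τ := by
      intro j hj
      rw [hS, Finset.mem_sdiff, Finset.mem_filter] at hj
      rw [hτ]
      refine hσ ?_
      rw [Fin.le_def]
      rcases hj with ⟨_, hj2⟩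
      simp only [Finset.mem_univ, true_and, not_le] at hj2
      exact le_of_lt hj2
    have hT'sum : ∑ j, T (σ j) = (m : ℝ) := by
      rw [Equiv.sum_comp σ T]
      exact hsum
    have step1 : ∑ j, (x ∘ σ) j * T (σ j)
        = (∑ j, ((x ∘ σ) j - τ) * T (σ j)) + τ * m := by
      have : ∀ j, (x ∘ σ) j * T (σ j) = ((x ∘ σ) j - τ) * T (σ j) + τ * T (σ j) := by
        intro j; ring
      simp only [this]
      rw [Finset.sum_add_distrib, ← Finset.mul_sum, hT'sum]
    have step2 : ∑ j, ((x ∘ σ) j - τ) * T (σ j) ≤ ∑ j ∈ S, ((x ∘ σ) j - τ) := by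
      rw [← Finset.sum_sdiff (Finset.subset_univ S)]
      have h1 : ∑ j ∈ Finset.univ \ S, ((x ∘ σ) j - τ) * T (σ j) ≤ 0 := by
        apply Finset.sum_nonpos
        intro j hj
        apply mul_nonpos_of_nonpos_of_nonneg
        · have := hySc j hj
          linarith
        · exact hT0 _
      have h2 : ∑ j ∈ S, ((x ∘ σ) j - τ) * T (σ j) ≤ ∑ j ∈ S, ((x ∘ σ) j - τ) := by
        apply Finset.sum_le_sum
        intro j hj
        have h3 := hyS j hj
        nlinarith [hT0 (σ j), hT1 (σ j)]
      linarith
    have step3 : ∑ j ∈ S, ((x ∘ σ) j - τ) = (∑ j ∈ S, (x ∘ σ) j) - τ * m := by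
      rw [Finset.sum_sub_distrib, Finset.sum_const, hcard]
      ring
    calc ∑ j, (x ∘ σ) j * T (σ j)
        = (∑ j, ((x ∘ σ) j - τ) * T (σ j)) + τ * m := step1
      _ ≤ (∑ j ∈ S, ((x ∘ σ) j - τ)) + τ * m := by linarith
      _ = ∑ j ∈ S, (x ∘ σ) j := by rw [step3]; ring

/-! ### Matrix lemmas -/

lemma bessel_row {ι κ : Type*} [Fintype ι] [Fintype κ] [DecidableEq κ]
    (M : Matrix ι κ ℂ) (h : Mᴴ * M = 1) (t : ι) :
    ∑ s, Complex.normSq (M t s) ≤ 1 := by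
  set P := M * Mᴴ with hP
  have hP2 : P * P = P := by
    rw [hP, Matrix.mul_assoc, ← Matrix.mul_assoc Mᴴ, h, Matrix.one_mul]
  have hPh : Pᴴ = P := by
    rw [hP, Matrix.conjTranspose_mul, Matrix.conjTranspose_conjTranspose]
  set a : ℝ := ∑ s, Complex.normSq (M t s) with ha
  have ha0 : 0 ≤ a := Finset.sum_nonneg fun s _ => Complex.normSq_nonneg _
  have hdiag : P t t = (a : ℂ) := by
    rw [hP, Matrix.mul_apply, ha]
    push_cast
    apply Finset.sum_congr rfl
    intro s _
    simp [Matrix.conjTranspose_apply, Complex.star_def, Complex.mul_conj]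
  have hexp : P t t = ((∑ u, Complex.normSq (P t u) : ℝ) : ℂ) := by
    conv_lhs => rw [← hP2]
    rw [Matrix.mul_apply]
    push_cast
    apply Finset.sum_congr rfl
    intro u _
    have : P u t = starRingEnd ℂ (P t u) := by
      conv_lhs => rw [← hPh]
      simp [Matrix.conjTranspose_apply, Complex.star_def]
    simp [this, Complex.mul_conj]
  have key : a = ∑ u, Complex.normSq (P t u) := by
    have := hdiag.symm.trans hexp
    exact_mod_cast this
  have hge : Complex.normSq (P t t) ≤ ∑ u, Complex.normSq (P t u) :=
    Finset.single_le_sum (fun u _ => Complex.normSq_nonneg _) (Finset.mem_univ t)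
  rw [hdiag, Complex.normSq_ofReal] at hge
  nlinarith [key ▸ hge]

lemma charpoly_diagonal' {ι : Type*} [Fintype ι] [DecidableEq ι] (d : ι → ℂ) :
    (Matrix.diagonal d).charpoly = ∏ i, (X - C (d i)) := by
  have hcm : Matrix.charmatrix (Matrix.diagonal d)
      = Matrix.diagonal (fun i => (X : ℂ[X]) - C (d i)) := by
    apply Matrix.ext
    intro i j
    by_cases h : i = j
    · subst h
      rw [Matrix.charmatrix_apply_eq, Matrix.diagonal_apply_eq, Matrix.diagonal_apply_eq]
    · rw [Matrix.charmatrix_apply_ne _ _ _ h, Matrix.diagonal_apply_ne _ h,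
        Matrix.diagonal_apply_ne _ h, map_zero, neg_zero]
  rw [Matrix.charpoly, hcm, Matrix.det_diagonal]

lemma charpoly_conj_unitary {ι : Type*} [Fintype ι] [DecidableEq ι] (U D : Matrix ι ι ℂ)
    (hU : U * Uᴴ = 1) : (U * D * Uᴴ).charpoly = D.charpoly := by
  have hUC : U.map C * Uᴴ.map C = 1 := by
    rw [← Matrix.map_mul, hU]
    simp
  have hmat : Matrix.charmatrix (U * D * Uᴴ)
      = (U.map C) * Matrix.charmatrix D * (Uᴴ.map C) := by
    rw [Matrix.charmatrix, Matrix.charmatrix]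
    rw [Matrix.mul_sub, Matrix.sub_mul]
    congr 1
    · have hs : (Matrix.scalar ι (X : ℂ[X])) = (X : ℂ[X]) • (1 : Matrix ι ι ℂ[X]) := by
        rw [Matrix.scalar_apply, Matrix.smul_one_eq_diagonal]
      rw [hs, Matrix.mul_smul, Matrix.mul_one, Matrix.smul_mul, hUC]
    · simp only [RingHom.mapMatrix_apply]
      rw [← Matrix.map_mul, ← Matrix.map_mul]
  have hdet : (U.map C).det * (Uᴴ.map C).det = 1 := by
    rw [← Matrix.det_mul, hUC, Matrix.det_one]
  rw [Matrix.charpoly, hmat, Matrix.det_mul, Matrix.det_mul, mul_right_comm, hdet, one_mul,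
    Matrix.charpoly]

lemma eig_multiset {ι : Type*} [Fintype ι] [DecidableEq ι] {A : Matrix ι ι ℂ}
    (hA : A.IsHermitian) (U : Matrix ι ι ℂ) (hU : U * Uᴴ = 1) (d : ι → ℝ)
    (h : A = U * Matrix.diagonal (fun i => ((d i : ℝ) : ℂ)) * Uᴴ) :
    Finset.univ.val.map hA.eigenvalues = Finset.univ.val.map d := by
  have hU0 : (hA.eigenvectorUnitary : Matrix ι ι ℂ) * (hA.eigenvectorUnitary : Matrix ι ι ℂ)ᴴ
      = 1 := by
    rw [← Matrix.star_eq_conjTranspose]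
    exact Matrix.mem_unitaryGroup_iff.mp hA.eigenvectorUnitary.2
  have h1 : A.charpoly = ∏ i, ((X : ℂ[X]) - C ((d i : ℂ))) := by
    rw [h, charpoly_conj_unitary _ _ hU, charpoly_diagonal']
  have h2 : A.charpoly = ∏ i, ((X : ℂ[X]) - C ((hA.eigenvalues i : ℂ))) := by
    conv_lhs => rw [hA.spectral_theorem]
    rw [Unitary.conjStarAlgAut_apply, Matrix.star_eq_conjTranspose, charpoly_conj_unitary _ _ hU0]
    rw [show Matrix.diagonal (RCLike.ofReal ∘ hA.eigenvalues)
        = Matrix.diagonal (fun i => ((hA.eigenvalues i : ℝ) : ℂ)) from rfl, charpoly_diagonal']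
  have h3 : Multiset.map (fun i => ((d i : ℝ) : ℂ)) Finset.univ.val
      = Multiset.map (fun i => ((hA.eigenvalues i : ℝ) : ℂ)) Finset.univ.val := by
    have r1 := Polynomial.roots_multiset_prod_X_sub_C
      (Finset.univ.val.map (fun i => ((d i : ℝ) : ℂ)))
    have r2 := Polynomial.roots_multiset_prod_X_sub_C
      (Finset.univ.val.map (fun i => ((hA.eigenvalues i : ℝ) : ℂ)))
    rw [Multiset.map_map] at r1 r2
    have e1 : ∏ i, ((X : ℂ[X]) - C ((d i : ℂ)))
        = (Multiset.map ((fun a => X - C a) ∘ fun i => ((d i : ℝ) : ℂ)) Finset.univ.val).prod :=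
      Finset.prod_eq_multiset_prod _ _
    have e2 : ∏ i, ((X : ℂ[X]) - C ((hA.eigenvalues i : ℂ)))
        = (Multiset.map ((fun a => X - C a) ∘ fun i => ((hA.eigenvalues i : ℝ) : ℂ))
            Finset.univ.val).prod :=
      Finset.prod_eq_multiset_prod _ _
    rw [e1] at h1
    rw [e2] at h2
    rw [← r1, ← r2, ← h1, ← h2]
  apply Multiset.map_injective (f := Complex.ofReal) Complex.ofReal_injective
  rw [Multiset.map_map, Multiset.map_map]
  exact h3.symm

lemma blockDiag_quad {k : ℕ} {n : Fin k → ℕ}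
    (Mb : ∀ j, Matrix (Fin (n j)) (Fin (n j)) ℂ)
    (A : Matrix ((j : Fin k) × Fin (n j)) ((j : Fin k) × Fin (n j)) ℂ)
    (j : Fin k) (i i' : Fin (n j)) :
    ((blockDiagonal' Mb)ᴴ * A * blockDiagonal' Mb) ⟨j, i⟩ ⟨j, i'⟩
      = ((Mb j)ᴴ * (A.submatrix (Sigma.mk j) (Sigma.mk j)) * Mb j) i i' := by
  have hW : ∀ (u : (j : Fin k) × Fin (n j)) (i₀ : Fin (n j)),
      blockDiagonal' Mb u ⟨j, i₀⟩ = if h : u.1 = j then Mb j (h ▸ u.2) i₀ else 0 := by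
    rintro ⟨j₂, i₂⟩ i₀
    rw [blockDiagonal'_apply]
    by_cases h : j₂ = j
    · subst h
      simp
    · simp [h]
  rw [Matrix.mul_apply, Matrix.mul_apply]
  rw [← Finset.univ_sigma_univ, Finset.sum_sigma]
  rw [Finset.sum_eq_single j]
  · apply Finset.sum_congr rfl
    intro i₂ _
    rw [hW ⟨j, i₂⟩ i']
    simp only [dif_pos rfl]
    congr 1
    rw [Matrix.mul_apply, Matrix.mul_apply]
    rw [← Finset.univ_sigma_univ, Finset.sum_sigma]
    rw [Finset.sum_eq_single j]
    · apply Finset.sum_congr rfl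
      intro i₁ _
      simp only [Matrix.conjTranspose_apply, Matrix.submatrix_apply]
      rw [hW ⟨j, i₁⟩ i]
      simp
    · intro j₁ _ hne
      apply Finset.sum_eq_zero
      intro i₁ _
      simp only [Matrix.conjTranspose_apply]
      rw [hW ⟨j₁, i₁⟩ i, dif_neg hne]
      simp
    · intro h; exact absurd (Finset.mem_univ j) h
  · intro j₂ _ hne
    apply Finset.sum_eq_zero
    intro i₂ _
    rw [hW ⟨j₂, i₂⟩ i', dif_neg hne]
    simp
  · intro h; exact absurd (Finset.mem_univ j) h

end Auxiliary

/-- Let `n = n₁ + ⋯ + n_k` (index set encoded as the sigma type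
`(j : Fin k) × Fin (n j)`), let `C` be an `n × n` complex positive definite matrix with
`j`-th diagonal block `Cⱼ = C.submatrix (Sigma.mk j) (Sigma.mk j)` positive definite
in the conformal partition, and let `p > 0`.  Then the vector of eigenvalues of the
block diagonal positive definite matrix `C₁^{-p} ⊕ ⋯ ⊕ C_k^{-p}` is weakly majorized
by the vector of eigenvalues of `C^{-p}`. -/
theorem eigenvalues_blockDiagonal_rpow_neg_weaklyMajorizedBy (k : ℕ) (n : Fin k → ℕ)
    (C : Matrix ((j : Fin k) × Fin (n j)) ((j : Fin k) × Fin (n j)) ℂ)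
    (hC : C.PosDef)
    (hCj : ∀ j, (C.submatrix (Sigma.mk j) (Sigma.mk j)).PosDef)
    (p : ℝ) (hp : 0 < p)
    (hB : (Matrix.blockDiagonal' (fun j => IsHermitian.rpow (hCj j).1 (-p))).PosDef)
    (hF : (IsHermitian.rpow hC.1 (-p)).PosDef) :
    WeaklyMajorizedBy hB.1.eigenvalues hF.1.eigenvalues := by
  classical
  have hνpos : ∀ t, 0 < hC.1.eigenvalues t := fun t => hC.eigenvalues_pos t
  have hapos : ∀ s : (j : Fin k) × Fin (n j), 0 < (hCj s.1).1.eigenvalues s.2 :=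
    fun s => (hCj s.1).eigenvalues_pos s.2
  set U0 : Matrix ((j : Fin k) × Fin (n j)) ((j : Fin k) × Fin (n j)) ℂ :=
    (hC.1.eigenvectorUnitary : Matrix ((j : Fin k) × Fin (n j)) ((j : Fin k) × Fin (n j)) ℂ)
    with hU0def
  set Uj : ∀ j, Matrix (Fin (n j)) (Fin (n j)) ℂ :=
    fun j => ((hCj j).1.eigenvectorUnitary : Matrix (Fin (n j)) (Fin (n j)) ℂ) with hUjdef
  set W := blockDiagonal' Uj with hWdef
  have hU0l : U0ᴴ * U0 = 1 := by
    rw [hU0def, ← Matrix.star_eq_conjTranspose]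
    exact Matrix.mem_unitaryGroup_iff'.mp hC.1.eigenvectorUnitary.2
  have hU0r : U0 * U0ᴴ = 1 := by
    rw [hU0def, ← Matrix.star_eq_conjTranspose]
    exact Matrix.mem_unitaryGroup_iff.mp hC.1.eigenvectorUnitary.2
  have hWl : Wᴴ * W = 1 := by
    rw [hWdef, Matrix.blockDiagonal'_conjTranspose, ← Matrix.blockDiagonal'_mul]
    have h1 : (fun j => (Uj j)ᴴ * Uj j) = fun j => (1 : Matrix (Fin (n j)) (Fin (n j)) ℂ) := by
      funext j
      rw [hUjdef, ← Matrix.star_eq_conjTranspose]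
      exact Matrix.mem_unitaryGroup_iff'.mp (hCj j).1.eigenvectorUnitary.2
    rw [h1]
    exact Matrix.blockDiagonal'_one
  have hWr : W * Wᴴ = 1 := by
    rw [hWdef, Matrix.blockDiagonal'_conjTranspose, ← Matrix.blockDiagonal'_mul]
    have h1 : (fun j => Uj j * (Uj j)ᴴ) = fun j => (1 : Matrix (Fin (n j)) (Fin (n j)) ℂ) := by
      funext j
      rw [hUjdef, ← Matrix.star_eq_conjTranspose]
      exact Matrix.mem_unitaryGroup_iff.mp (hCj j).1.eigenvectorUnitary.2
    rw [h1]
    exact Matrix.blockDiagonal'_one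
  set V := U0ᴴ * W with hVdef
  have hVl : Vᴴ * V = 1 := by
    rw [hVdef, Matrix.conjTranspose_mul, Matrix.conjTranspose_conjTranspose,
      Matrix.mul_assoc, ← Matrix.mul_assoc U0, hU0r, Matrix.one_mul, hWl]
  have hVr : V * Vᴴ = 1 := by
    rw [hVdef, Matrix.conjTranspose_mul, Matrix.conjTranspose_conjTranspose,
      Matrix.mul_assoc, ← Matrix.mul_assoc W, hWr, Matrix.one_mul, hU0l]
  -- spectral decomposition of C
  have hCspec : C = U0 * Matrix.diagonal (fun t => ((hC.1.eigenvalues t : ℝ) : ℂ)) * U0ᴴ := by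
    rw [hU0def, ← Matrix.star_eq_conjTranspose]
    exact hC.1.spectral_theorem
  -- decomposition of B
  have hBdec : Matrix.blockDiagonal' (fun j => IsHermitian.rpow (hCj j).1 (-p))
      = W * Matrix.diagonal
          (fun s : (j : Fin k) × Fin (n j) => ((((hCj s.1).1.eigenvalues s.2 ^ (-p) : ℝ)) : ℂ))
        * Wᴴ := by
    have e0 : (fun j => IsHermitian.rpow (hCj j).1 (-p))
        = fun j => Uj j
            * Matrix.diagonal (fun i => ((((hCj j).1.eigenvalues i ^ (-p) : ℝ)) : ℂ))
            * (Uj j)ᴴ := by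
      funext j
      unfold IsHermitian.rpow
      rw [hUjdef, Matrix.star_eq_conjTranspose]
    rw [e0, Matrix.blockDiagonal'_mul, Matrix.blockDiagonal'_mul, Matrix.blockDiagonal'_diagonal,
      hWdef, Matrix.blockDiagonal'_conjTranspose]
  -- decomposition of F
  have hFdec : IsHermitian.rpow hC.1 (-p)
      = U0 * Matrix.diagonal (fun t => (((hC.1.eigenvalues t ^ (-p) : ℝ)) : ℂ)) * U0ᴴ := by
    unfold IsHermitian.rpow
    rw [hU0def, Matrix.star_eq_conjTranspose]
  -- eigenvalue multisets
  have hBmul : Finset.univ.val.map hB.1.eigenvalues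
      = Finset.univ.val.map
          (fun s : (j : Fin k) × Fin (n j) => ((hCj s.1).1.eigenvalues s.2) ^ (-p)) :=
    eig_multiset hB.1 W hWr _ hBdec
  have hFmul : Finset.univ.val.map hF.1.eigenvalues
      = Finset.univ.val.map (fun t => (hC.1.eigenvalues t) ^ (-p)) :=
    eig_multiset hF.1 U0 hU0r _ hFdec
  -- quadratic identity
  have hquadC : ∀ s : (j : Fin k) × Fin (n j),
      (((hCj s.1).1.eigenvalues s.2 : ℝ) : ℂ)
        = ∑ t, ((hC.1.eigenvalues t : ℝ) : ℂ) * ((Complex.normSq (V t s) : ℝ) : ℂ) := by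
    rintro ⟨j, i⟩
    have h1 : (Wᴴ * C * W) ⟨j, i⟩ ⟨j, i⟩ = (((hCj j).1.eigenvalues i : ℝ) : ℂ) := by
      rw [hWdef, blockDiag_quad Uj C j i i]
      have h2 := (hCj j).1.conjStarAlgAut_star_eigenvectorUnitary
      rw [Unitary.conjStarAlgAut_star_apply] at h2
      rw [Matrix.star_eq_conjTranspose] at h2
      rw [hUjdef]
      rw [h2, Matrix.diagonal_apply_eq]
      rfl
    have h2 : Wᴴ * C * W
        = Vᴴ * Matrix.diagonal (fun t => ((hC.1.eigenvalues t : ℝ) : ℂ)) * V := by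
      rw [hVdef, Matrix.conjTranspose_mul, Matrix.conjTranspose_conjTranspose]
      conv_lhs => rw [hCspec]
      simp only [Matrix.mul_assoc]
    have h3 : (Vᴴ * Matrix.diagonal (fun t => ((hC.1.eigenvalues t : ℝ) : ℂ)) * V) ⟨j, i⟩ ⟨j, i⟩
        = ∑ t, ((hC.1.eigenvalues t : ℝ) : ℂ) * ((Complex.normSq (V t ⟨j, i⟩) : ℝ) : ℂ) := by
      rw [Matrix.mul_apply]
      apply Finset.sum_congr rfl
      intro t _
      rw [Matrix.mul_diagonal, Matrix.conjTranspose_apply]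
      rw [show star (V t ⟨j, i⟩) * ((hC.1.eigenvalues t : ℝ) : ℂ) * V t ⟨j, i⟩
          = ((hC.1.eigenvalues t : ℝ) : ℂ) * (V t ⟨j, i⟩ * starRingEnd ℂ (V t ⟨j, i⟩)) from by
        simp [Complex.star_def]; ring]
      rw [Complex.mul_conj]
    rw [← h3, ← h2, h1]
  have hquad : ∀ s : (j : Fin k) × Fin (n j),
      (hCj s.1).1.eigenvalues s.2 = ∑ t, hC.1.eigenvalues t * Complex.normSq (V t s) := by
    intro s
    exact_mod_cast hquadC s
  have hcol : ∀ s : (j : Fin k) × Fin (n j), ∑ t, Complex.normSq (V t s) = 1 := by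
    intro s
    have h1 : (Vᴴ * V) s s = (1 : Matrix _ _ ℂ) s s := by rw [hVl]
    rw [Matrix.one_apply_eq, Matrix.mul_apply] at h1
    have h2 : ∑ t, ((Complex.normSq (V t s) : ℝ) : ℂ) = 1 := by
      rw [← h1]
      apply Finset.sum_congr rfl
      intro t _
      rw [Matrix.conjTranspose_apply]
      rw [show star (V t s) * V t s = V t s * starRingEnd ℂ (V t s) from by
        simp [Complex.star_def]; ring]
      rw [Complex.mul_conj]
    exact_mod_cast h2
  -- the majorization
  intro r
  rw [sumLargest_congr hBmul r, sumLargest_congr hFmul r]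
  set N := Fintype.card ((j : Fin k) × Fin (n j)) with hNdef
  set m := min r N with hmdef
  have hmN : m ≤ N := min_le_right _ _
  have hmr : m ≤ r := min_le_left _ _
  obtain ⟨σ, hσ⟩ := exists_monotone_equiv
    (fun s : (j : Fin k) × Fin (n j) => ((hCj s.1).1.eigenvalues s.2) ^ (-p))
  rw [sumLargest_min (fun s : (j : Fin k) × Fin (n j) =>
    ((hCj s.1).1.eigenvalues s.2) ^ (-p)) r]
  rw [← sumLargest_congr (map_univ_equiv_val σ _) m, sumLargest_monotone_eq _ hσ]
  set Q : Finset (Fin N) := Finset.univ.filter (fun j : Fin N => N - m ≤ (j : ℕ)) with hQdef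
  have hQcard : Q.card = m := card_filter_ge hmN
  -- Jensen pointwise
  have jensen : ∀ s : (j : Fin k) × Fin (n j),
      ((hCj s.1).1.eigenvalues s.2) ^ (-p)
        ≤ ∑ t, ((hC.1.eigenvalues t) ^ (-p)) * Complex.normSq (V t s) := by
    intro s
    have hconv := convexOn_rpow_neg hp
    have h0 : ∀ t ∈ Finset.univ, 0 ≤ Complex.normSq (V t s) :=
      fun t _ => Complex.normSq_nonneg _
    have h1 : ∑ t, Complex.normSq (V t s) = 1 := hcol s
    have hmem : ∀ t ∈ Finset.univ, hC.1.eigenvalues t ∈ Set.Ioi (0:ℝ) :=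
      fun t _ => hνpos t
    have hjen := hconv.map_sum_le h0 h1 hmem
    have harg : ∑ t, Complex.normSq (V t s) • hC.1.eigenvalues t
        = (hCj s.1).1.eigenvalues s.2 := by
      rw [hquad s]
      apply Finset.sum_congr rfl
      intro t _
      rw [smul_eq_mul, mul_comm]
    rw [harg] at hjen
    refine le_trans hjen ?_
    apply le_of_eq
    apply Finset.sum_congr rfl
    intro t _
    rw [smul_eq_mul, mul_comm]
  -- the weights
  set T : ((j : Fin k) × Fin (n j)) → ℝ :=
    fun t => ∑ q ∈ Q, Complex.normSq (V t (σ q)) with hTdef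
  have hT0 : ∀ t, 0 ≤ T t :=
    fun t => Finset.sum_nonneg fun q _ => Complex.normSq_nonneg _
  have hT1 : ∀ t, T t ≤ 1 := by
    intro t
    set M : Matrix ((j : Fin k) × Fin (n j)) {q // q ∈ Q} ℂ :=
      Matrix.of (fun t (q : {q // q ∈ Q}) => V t (σ q.1)) with hMdef
    have hM : Mᴴ * M = 1 := by
      apply Matrix.ext
      intro q q'
      rw [Matrix.mul_apply]
      have he : ∑ u, Mᴴ q u * M u q' = (Vᴴ * V) (σ q.1) (σ q'.1) := by
        rw [Matrix.mul_apply]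
        apply Finset.sum_congr rfl
        intro u _
        rw [hMdef]
        simp [Matrix.conjTranspose_apply]
      rw [he, hVl]
      by_cases h : q = q'
      · subst h
        rw [Matrix.one_apply_eq, Matrix.one_apply_eq]
      · rw [Matrix.one_apply_ne, Matrix.one_apply_ne h]
        intro hc
        exact h (Subtype.ext (σ.injective hc))
    have hb := bessel_row M hM t
    rw [hTdef]
    calc ∑ q ∈ Q, Complex.normSq (V t (σ q))
        = ∑ q : {q // q ∈ Q}, Complex.normSq (M t q) := by
          rw [← Finset.sum_coe_sort Q (fun q => Complex.normSq (V t (σ q)))]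
          rfl
      _ ≤ 1 := hb
  have hTsum : ∑ t, T t = (m : ℝ) := by
    rw [hTdef]
    rw [Finset.sum_comm]
    have : ∀ q ∈ Q, ∑ t, Complex.normSq (V t (σ q)) = 1 := fun q _ => hcol (σ q)
    rw [Finset.sum_congr rfl this, Finset.sum_const, hQcard, nsmul_eq_mul, mul_one]
  -- final chain
  calc ∑ q ∈ Q, ((fun s : (j : Fin k) × Fin (n j) =>
          ((hCj s.1).1.eigenvalues s.2) ^ (-p)) ∘ σ) q
      ≤ ∑ q ∈ Q, ∑ t, ((hC.1.eigenvalues t) ^ (-p)) * Complex.normSq (V t (σ q)) := by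
        apply Finset.sum_le_sum
        intro q _
        exact jensen (σ q)
    _ = ∑ t, ((hC.1.eigenvalues t) ^ (-p)) * T t := by
        rw [Finset.sum_comm]
        apply Finset.sum_congr rfl
        intro t _
        rw [hTdef, Finset.mul_sum]
    _ ≤ sumLargest (fun t => (hC.1.eigenvalues t) ^ (-p)) m :=
        sum_mul_le_sumLargest _ T hT0 hT1 m hmN hTsum
    _ ≤ sumLargest (fun t => (hC.1.eigenvalues t) ^ (-p)) r :=
        sumLargest_mono_r _ (fun t => Real.rpow_nonneg (hνpos t).le _) hmr
end

section
/- Let A₁, …, A_m ∈ ℙ_n and let n = n₁ + ⋯ + n_k; for each i partition A_i conformally and write A_i^{(j)} ∈ ℙ_{n_j} for the j-th diagonal block of A_i. Then the vector of eigenvalues of the block diagonal matrix (Σ_{i=1}^m (A_i^{(1)})⁻¹) ⊕ ⋯ ⊕ (Σ_{i=1}^m (A_i^{(k)})⁻¹) is weakly majorized by the vector of eigenvalues of Σ_{i=1}^m A_i⁻¹. -/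
open Matrix
open scoped ComplexOrder

private lemma ofFn_reverse' {α : Type*} {N : ℕ} (f : Fin N → α) :
    (List.ofFn f).reverse = List.ofFn (fun i => f (Fin.rev i)) := by
  apply List.ext_getElem (by simp)
  intro i h1 h2
  rw [List.getElem_reverse, List.getElem_ofFn, List.getElem_ofFn]
  congr 1
  simp only [List.length_reverse, List.length_ofFn] at h1 h2 ⊢
  ext
  simp only [Fin.rev]
  omega

private lemma card_filter_val_lt (N r : ℕ) :
    ((Finset.univ : Finset (Fin N)).filter fun j : Fin N => (j : ℕ) < r).card = min r N := by
  rw [← Fintype.card_fin (min r N), ← Finset.card_univ]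
  refine Finset.card_bij' (fun (j : Fin N) hj => (⟨(j : ℕ),
      Nat.lt_min.mpr ⟨(Finset.mem_filter.mp hj).2, j.isLt⟩⟩ : Fin (min r N)))
    (fun (j : Fin (min r N)) _ => (⟨(j : ℕ), lt_of_lt_of_le j.isLt (min_le_right _ _)⟩ : Fin N))
    (fun a ha => Finset.mem_univ _) (fun a _ => Finset.mem_filter.mpr ⟨Finset.mem_univ _,
      lt_of_lt_of_le a.isLt (min_le_left _ _)⟩) (fun a ha => rfl) (fun a ha => rfl)

private lemma exists_topset {ι : Type*} [Fintype ι] [DecidableEq ι] (x : ι → ℝ) (r : ℕ) :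
    ∃ T : Finset ι, T.card = min r (Fintype.card ι) ∧
      (∑ i ∈ T, x i) = sumLargest x r ∧
      ∀ i ∈ T, ∀ i' ∉ T, x i' ≤ x i := by
  classical
  set N := Fintype.card ι with hN
  let eqv : Fin N ≃ ι := (Fintype.equivFin ι).symm
  let g : Fin N → ℝ := x ∘ eqv
  let σ := Tuple.sort g
  have hmono : Monotone (g ∘ σ) := Tuple.monotone_sort g
  have hmap : Finset.univ.val.map x = Finset.univ.val.map (g ∘ σ) := by
    let E : Fin N ≃ ι := (σ : Fin N ≃ Fin N).trans eqv
    have key : Multiset.map (⇑E) Finset.univ.val = Finset.univ.val := by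
      have := congrArg Finset.val (Finset.map_univ_equiv E)
      simpa [Finset.map_val] using this
    have : (g ∘ σ) = x ∘ E := rfl
    rw [this, ← Multiset.map_map, key]
  have hlist : (Finset.univ.val.map x).sort (· ≤ ·) = List.ofFn (g ∘ σ) := by
    refine List.Perm.eq_of_pairwise' (Multiset.pairwise_sort _ _)
      (List.pairwise_ofFn.mpr fun i j hij => hmono hij.le) ?_
    apply Multiset.coe_eq_coe.mp
    rw [Multiset.sort_eq, hmap, ← Fin.univ_val_map (g ∘ σ)]
  have hsum : sumLargest x r =
      ∑ j ∈ (Finset.univ.filter fun j : Fin N => (j : ℕ) < r), g (σ (Fin.rev j)) := by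
    rw [sumLargest, hlist, ofFn_reverse', List.sum_take_ofFn]
    rfl
  have hinj : Function.Injective (fun j : Fin N => eqv (σ (Fin.rev j))) := by
    intro a b hab
    simpa using Fin.rev_injective (σ.injective (eqv.injective hab))
  refine ⟨(Finset.univ.filter fun j : Fin N => (j : ℕ) < r).image
      (fun j => eqv (σ (Fin.rev j))), ?_, ?_, ?_⟩
  · rw [Finset.card_image_of_injective _ hinj, card_filter_val_lt]
  · rw [Finset.sum_image (fun a _ b _ h => hinj h), hsum]
    rfl
  · intro i hi i' hi'
    obtain ⟨a, ha, rfl⟩ := Finset.mem_image.mp hi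
    have ha' : (a : ℕ) < r := (Finset.mem_filter.mp ha).2
    -- express i' as image of some b
    set b := Fin.rev (σ.symm (eqv.symm i')) with hb
    have hib : i' = eqv (σ (Fin.rev b)) := by simp [hb]
    have hbr : ¬ ((b : ℕ) < r) := by
      intro hbl
      exact hi' (Finset.mem_image.mpr ⟨b, Finset.mem_filter.mpr ⟨Finset.mem_univ _, hbl⟩, hib.symm⟩)
    have : Fin.rev b ≤ Fin.rev a := by
      have : (a : ℕ) < (b : ℕ) := lt_of_lt_of_le ha' (not_lt.mp hbr)
      simp only [Fin.le_def, Fin.rev]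
      omega
    have := hmono this
    rw [hib]; exact this

private lemma sum_mul_le_sumLargest_s8 {ι : Type*} [Fintype ι] [DecidableEq ι]
    (x d : ι → ℝ) (r : ℕ) (hx : ∀ i, 0 ≤ x i) (hd0 : ∀ i, 0 ≤ d i) (hd1 : ∀ i, d i ≤ 1)
    (hsum : ∑ i, d i ≤ (r : ℝ)) : ∑ i, x i * d i ≤ sumLargest x r := by
  classical
  obtain ⟨T, hTcard, hTsum, hTdom⟩ := exists_topset x r
  rw [← hTsum]
  by_cases hTu : T = Finset.univ
  · subst hTu
    exact Finset.sum_le_sum fun i _ =>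
      mul_le_of_le_one_right (hx i) (hd1 i)
  have hcard_lt : T.card < Fintype.card ι := by
    rcases lt_or_eq_of_le (Finset.card_le_univ T) with h | h
    · simpa using h
    · exact absurd (Finset.eq_univ_of_card T (by simpa using h)) hTu
  have hTr : T.card = r := by
    rcases Nat.le_total r (Fintype.card ι) with h | h
    · rw [hTcard, min_eq_left h]
    · rw [hTcard, min_eq_right h] at hcard_lt ⊢; omega
  rcases Nat.eq_zero_or_pos r with hr | hr
  · subst hr
    have hT0 : T = ∅ := Finset.card_eq_zero.mp (by simpa using hTr)
    have hd_zero : ∀ i, d i = 0 := by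
      intro i
      have h1 : ∑ i, d i = 0 :=
        le_antisymm (by simpa using hsum) (Finset.sum_nonneg fun i _ => hd0 i)
      have := (Finset.sum_eq_zero_iff_of_nonneg (fun i _ => hd0 i)).mp h1
      exact this i (Finset.mem_univ i)
    simp [hT0, hd_zero]
  have hTne : T.Nonempty := Finset.card_pos.mp (by omega)
  set t := T.inf' hTne x with ht
  obtain ⟨i₀, hi₀, hti₀⟩ := Finset.exists_mem_eq_inf' hTne x
  have ht0 : 0 ≤ t := by rw [ht, hti₀]; exact hx i₀
  have htle : ∀ i ∈ T, t ≤ x i := fun i hi => Finset.inf'_le x hi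
  have htge : ∀ i' ∉ T, x i' ≤ t := fun i' hi' =>
    Finset.le_inf' hTne x fun i hi => hTdom i hi i' hi'
  have hsplit : ∑ i, x i * d i = ∑ i ∈ T, x i * d i + ∑ i ∈ Tᶜ, x i * d i :=
    (Finset.sum_add_sum_compl T _).symm
  have hc1 : ∑ i ∈ Tᶜ, x i * d i ≤ t * ∑ i ∈ Tᶜ, d i := by
    rw [Finset.mul_sum]
    exact Finset.sum_le_sum fun i hi =>
      mul_le_mul_of_nonneg_right (htge i (by simpa using hi)) (hd0 i)
  have hc2 : ∑ i ∈ Tᶜ, d i ≤ ∑ i ∈ T, (1 - d i) := by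
    have h1 : ∑ i ∈ T, d i + ∑ i ∈ Tᶜ, d i = ∑ i, d i := Finset.sum_add_sum_compl T _
    have h2 : ∑ i ∈ T, (1 - d i) = (T.card : ℝ) - ∑ i ∈ T, d i := by
      rw [Finset.sum_sub_distrib]
      simp
    rw [h2, hTr]
    have := hsum
    linarith
  calc ∑ i, x i * d i ≤ ∑ i ∈ T, x i * d i + t * ∑ i ∈ Tᶜ, d i := by
        rw [hsplit]; linarith
    _ ≤ ∑ i ∈ T, x i * d i + t * ∑ i ∈ T, (1 - d i) := by
        have := mul_le_mul_of_nonneg_left hc2 ht0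
        linarith
    _ = ∑ i ∈ T, (x i * d i + t * (1 - d i)) := by
        rw [Finset.sum_add_distrib, Finset.mul_sum]
    _ ≤ ∑ i ∈ T, x i := by
        apply Finset.sum_le_sum
        intro i hi
        have h1 : t * (1 - d i) ≤ x i * (1 - d i) :=
          mul_le_mul_of_nonneg_right (htle i hi) (by linarith [hd1 i])
        nlinarith [hd1 i, hd0 i, htle i hi]

section Blocks
variable {k : ℕ} {n : Fin k → ℕ}

/-- Embed a vector on block `j` into the sigma type, zero elsewhere. -/
private def embv (j : Fin k) (y : Fin (n j) → ℂ) : ((j : Fin k) × Fin (n j)) → ℂ :=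
  fun q => if h : q.1 = j then y (Fin.cast (congrArg n h) q.2) else 0

/-- Restrict a vector on the sigma type to block `j`. -/
private def restr (j : Fin k) (w : ((j : Fin k) × Fin (n j)) → ℂ) : Fin (n j) → ℂ :=
  fun p => w ⟨j, p⟩

private lemma embv_mk_self (j : Fin k) (y : Fin (n j) → ℂ) (p : Fin (n j)) :
    embv j y ⟨j, p⟩ = y p := by
  simp [embv]

private lemma embv_ne (j : Fin k) (y : Fin (n j) → ℂ) (q : (j : Fin k) × Fin (n j))
    (h : q.1 ≠ j) : embv j y q = 0 := dif_neg h

private lemma embv_restr_apply (j : Fin k) (w : ((j : Fin k) × Fin (n j)) → ℂ)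
    (q : (j : Fin k) × Fin (n j)) :
    embv j (restr j w) q = if q.1 = j then w q else 0 := by
  rcases q with ⟨j', p⟩
  by_cases h : j' = j
  · subst h; simp [embv, restr]
  · simp [embv, h]

private lemma sum_block {M : Type*} [AddCommMonoid M] (j : Fin k)
    (g : ((j : Fin k) × Fin (n j)) → M) (hg : ∀ q, q.1 ≠ j → g q = 0) :
    ∑ q, g q = ∑ p, g ⟨j, p⟩ := by
  rw [← Finset.univ_sigma_univ, Finset.sum_sigma]
  exact Finset.sum_eq_single_of_mem j (Finset.mem_univ j)
    (fun j' _ hj' => Finset.sum_eq_zero fun p _ => hg ⟨j', p⟩ hj')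

private lemma sum_sigma_blocks {M : Type*} [AddCommMonoid M]
    (g : ((j : Fin k) × Fin (n j)) → M) :
    ∑ q, g q = ∑ j, ∑ p, g ⟨j, p⟩ := by
  rw [← Finset.univ_sigma_univ, Finset.sum_sigma]

private lemma star_embv_dot (j : Fin k) (a b : Fin (n j) → ℂ) :
    star (embv j a) ⬝ᵥ embv j b = star a ⬝ᵥ b := by
  unfold dotProduct
  rw [sum_block j _ (fun q hq => by simp [Pi.star_apply, embv_ne _ _ _ hq])]
  exact Finset.sum_congr rfl fun p _ => by simp [embv_mk_self]

private lemma quad_embv (M : Matrix ((j : Fin k) × Fin (n j)) ((j : Fin k) × Fin (n j)) ℂ)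
    (j : Fin k) (y : Fin (n j) → ℂ) :
    star (embv j y) ⬝ᵥ (M *ᵥ embv j y) =
      star y ⬝ᵥ (M.submatrix (@Sigma.mk (Fin k) (fun j => Fin (n j)) j) (@Sigma.mk (Fin k) (fun j => Fin (n j)) j) *ᵥ y) := by
  have hmv : ∀ p : Fin (n j), (M *ᵥ embv j y) ⟨j, p⟩ =
      (M.submatrix (@Sigma.mk (Fin k) (fun j => Fin (n j)) j) (@Sigma.mk (Fin k) (fun j => Fin (n j)) j) *ᵥ y) p := by
    intro p
    show (M ⟨j, p⟩) ⬝ᵥ (embv j y) = _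
    unfold dotProduct
    rw [sum_block j _ (fun q hq => by simp [embv_ne _ _ _ hq])]
    exact Finset.sum_congr rfl fun p' _ => by simp [embv_mk_self, mulVec, dotProduct]
  unfold dotProduct
  rw [sum_block j _ (fun q hq => by simp [Pi.star_apply, embv_ne _ _ _ hq])]
  refine Finset.sum_congr rfl fun p _ => ?_
  rw [hmv p]
  simp [embv_mk_self]

private lemma posdef_submatrix {A : Matrix ((j : Fin k) × Fin (n j)) ((j : Fin k) × Fin (n j)) ℂ}
    (hA : A.PosDef) (j : Fin k) :
    (A.submatrix (@Sigma.mk (Fin k) (fun j => Fin (n j)) j) (@Sigma.mk (Fin k) (fun j => Fin (n j)) j)).PosDef := by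
  rw [Matrix.posDef_iff_dotProduct_mulVec]
  constructor
  · exact hA.1.submatrix _
  · intro y hy
    have h1 : embv j y ≠ 0 := by
      intro h0
      apply hy
      funext p
      have := congrFun h0 ⟨j, p⟩
      simpa [embv_mk_self] using this
    have := hA.dotProduct_mulVec_pos h1
    rwa [quad_embv] at this

private lemma block_inv_le {A : Matrix ((j : Fin k) × Fin (n j)) ((j : Fin k) × Fin (n j)) ℂ}
    (hA : A.PosDef) (j : Fin k) (y : Fin (n j) → ℂ) :
    star y ⬝ᵥ ((A.submatrix (@Sigma.mk (Fin k) (fun j => Fin (n j)) j) (@Sigma.mk (Fin k) (fun j => Fin (n j)) j))⁻¹ *ᵥ y)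
      ≤ star (embv j y) ⬝ᵥ (A⁻¹ *ᵥ embv j y) := by
  classical
  set Aj := A.submatrix (@Sigma.mk (Fin k) (fun j => Fin (n j)) j) (@Sigma.mk (Fin k) (fun j => Fin (n j)) j) with hAjdef
  have hAj : Aj.PosDef := posdef_submatrix hA j
  have : Invertible A := hA.isUnit.invertible
  have : Invertible Aj := hAj.isUnit.invertible
  set u := embv j y with hu
  set z := Aj⁻¹ *ᵥ y with hz
  set w := embv j z with hw
  have h0 := hA.posSemidef.dotProduct_mulVec_nonneg (A⁻¹ *ᵥ u - w)
  have hAmul : A *ᵥ (A⁻¹ *ᵥ u - w) = u - A *ᵥ w := by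
    rw [Matrix.mulVec_sub, Matrix.mulVec_mulVec, Matrix.mul_inv_of_invertible, Matrix.one_mulVec]
  have hherm_inv : A⁻¹.IsHermitian := hA.1.inv
  have key : star (A⁻¹ *ᵥ u - w) ⬝ᵥ (A *ᵥ (A⁻¹ *ᵥ u - w)) =
      star u ⬝ᵥ (A⁻¹ *ᵥ u) - star y ⬝ᵥ z := by
    rw [hAmul, star_sub, sub_dotProduct, dotProduct_sub, dotProduct_sub]
    have e1 : star (A⁻¹ *ᵥ u) ⬝ᵥ u = star u ⬝ᵥ (A⁻¹ *ᵥ u) := by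
      rw [Matrix.star_mulVec, hherm_inv.eq, ← Matrix.dotProduct_mulVec]
    have e2 : star (A⁻¹ *ᵥ u) ⬝ᵥ (A *ᵥ w) = star y ⬝ᵥ z := by
      rw [Matrix.star_mulVec, hherm_inv.eq, ← Matrix.dotProduct_mulVec,
        Matrix.mulVec_mulVec, Matrix.inv_mul_of_invertible, Matrix.one_mulVec]
      rw [hu, hw, star_embv_dot]
    have e3 : star w ⬝ᵥ u = star z ⬝ᵥ y := by
      rw [hw, hu, star_embv_dot]
    have e4 : star w ⬝ᵥ (A *ᵥ w) = star z ⬝ᵥ y := by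
      rw [hw, quad_embv, ← hAjdef, hz, Matrix.mulVec_mulVec, Matrix.mul_inv_of_invertible,
        Matrix.one_mulVec]
    rw [e1, e2, e3, e4]
    ring
  rw [key, sub_nonneg] at h0
  exact h0

private lemma quad_blockDiagonal (D : ∀ j : Fin k, Matrix (Fin (n j)) (Fin (n j)) ℂ)
    (w : ((j : Fin k) × Fin (n j)) → ℂ) :
    star w ⬝ᵥ (Matrix.blockDiagonal' D *ᵥ w) =
      ∑ j, star (restr j w) ⬝ᵥ (D j *ᵥ restr j w) := by
  have hmv : ∀ (j : Fin k) (p : Fin (n j)),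
      (Matrix.blockDiagonal' D *ᵥ w) ⟨j, p⟩ = (D j *ᵥ restr j w) p := by
    intro j p
    show (Matrix.blockDiagonal' D ⟨j, p⟩) ⬝ᵥ w = _
    unfold dotProduct
    rw [sum_block j _ (fun q hq => by
      rcases q with ⟨j', p'⟩
      rw [Matrix.blockDiagonal'_apply_ne _ _ _ (Ne.symm hq), zero_mul])]
    exact Finset.sum_congr rfl fun p' _ => by
      rw [Matrix.blockDiagonal'_apply_eq]; rfl
  unfold dotProduct
  rw [sum_sigma_blocks]
  exact Finset.sum_congr rfl fun j _ => Finset.sum_congr rfl fun p _ => by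
    rw [hmv j p]; rfl

end Blocks
section Spec
variable {ι : Type*} [Fintype ι] [DecidableEq ι]

private lemma re_dot_self (v : ι → ℂ) :
    (star v ⬝ᵥ v).re = ∑ a, Complex.normSq (v a) := by
  rw [dotProduct, Complex.re_sum]
  refine Finset.sum_congr rfl fun a _ => ?_
  rw [Pi.star_apply]
  have : (star (v a) : ℂ) * v a = ((Complex.normSq (v a) : ℝ) : ℂ) := by
    rw [Complex.star_def, mul_comm, Complex.mul_conj]
  rw [this, Complex.ofReal_re]

private lemma parseval' {U : Matrix ι ι ℂ} (hU : U ∈ Matrix.unitaryGroup ι ℂ) (u : ι → ℂ) :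
    ∑ q, Complex.normSq ((star U *ᵥ u) q) = ∑ a, Complex.normSq (u a) := by
  have h : star (star U *ᵥ u) ⬝ᵥ (star U *ᵥ u) = star u ⬝ᵥ u := by
    have h1 : U * Uᴴ = 1 := by
      rw [← Matrix.star_eq_conjTranspose]; exact (Matrix.mem_unitaryGroup_iff).mp hU
    rw [Matrix.star_mulVec, Matrix.star_eq_conjTranspose, Matrix.conjTranspose_conjTranspose,
      ← Matrix.dotProduct_mulVec, Matrix.mulVec_mulVec, h1, Matrix.one_mulVec]
  rw [← re_dot_self, ← re_dot_self, h]

private lemma unitary_col_normSq {U : Matrix ι ι ℂ} (hU : U ∈ Matrix.unitaryGroup ι ℂ) (q : ι) :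
    ∑ a, Complex.normSq (U a q) = 1 := by
  have h := (Matrix.mem_unitaryGroup_iff').mp hU
  have h2 : (star U * U) q q = 1 := by rw [h]; simp
  rw [Matrix.mul_apply] at h2
  have h3 : ∀ a, (star U) q a * U a q = ((Complex.normSq (U a q) : ℝ) : ℂ) := by
    intro a
    rw [Matrix.star_apply, Complex.star_def, mul_comm, Complex.mul_conj]
  rw [Finset.sum_congr rfl (fun a _ => h3 a)] at h2
  have h4 := congrArg Complex.re h2
  rw [Complex.re_sum] at h4
  simpa using h4

private lemma re_quad_eq_sum {S : Matrix ι ι ℂ} (hS : S.IsHermitian) (u : ι → ℂ) :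
    (star u ⬝ᵥ (S *ᵥ u)).re = ∑ q, hS.eigenvalues q *
      Complex.normSq ((star (hS.eigenvectorUnitary : Matrix ι ι ℂ) *ᵥ u) q) := by
  set U : Matrix ι ι ℂ := (hS.eigenvectorUnitary : Matrix ι ι ℂ) with hU
  set y := star U *ᵥ u with hy
  have hsu : star u ᵥ* U = star y := by
    rw [hy, Matrix.star_mulVec, Matrix.star_eq_conjTranspose, Matrix.conjTranspose_conjTranspose]
  conv_lhs => rw [hS.spectral_theorem, Unitary.conjStarAlgAut_apply, ← hU]
  rw [Matrix.mul_assoc, ← Matrix.mulVec_mulVec, ← Matrix.mulVec_mulVec,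
    Matrix.dotProduct_mulVec, hsu, ← hy]
  rw [dotProduct, Complex.re_sum]
  refine Finset.sum_congr rfl fun q _ => ?_
  rw [Matrix.mulVec_diagonal]
  have : star y q * ((RCLike.ofReal ∘ hS.eigenvalues) q * y q)
      = ((hS.eigenvalues q * Complex.normSq (y q) : ℝ) : ℂ) := by
    rw [Pi.star_apply, Complex.star_def, Function.comp_apply]
    rw [Complex.ofReal_mul, ← Complex.mul_conj]
    show (starRingEnd ℂ) (y q) * ((hS.eigenvalues q : ℂ) * y q) = _
    ring
  rw [this, Complex.ofReal_re]

end Spec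

private lemma dot_sum_mulVec {α : Type*} [Fintype α] {m' : ℕ}
    (M : Fin m' → Matrix α α ℂ) (x : α → ℂ) :
    star x ⬝ᵥ ((∑ i, M i) *ᵥ x) = ∑ i, star x ⬝ᵥ (M i *ᵥ x) := by
  have h : (∑ i, M i) *ᵥ x = ∑ i, M i *ᵥ x := by
    ext a
    simp only [Matrix.mulVec, dotProduct, Matrix.sum_apply, Finset.sum_apply, Finset.sum_mul]
    exact Finset.sum_comm
  rw [h]
  simp only [dotProduct, Finset.sum_apply, Finset.mul_sum]
  exact Finset.sum_comm

section Blocks2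
variable {k : ℕ} {n : Fin k → ℕ}

private lemma sum_normSq_P (w : ((j : Fin k) × Fin (n j)) → ℂ) :
    ∑ j, ∑ a, Complex.normSq (embv j (restr j w) a) = ∑ a, Complex.normSq (w a) := by
  rw [Finset.sum_comm]
  refine Finset.sum_congr rfl fun a _ => ?_
  have h : ∀ j, Complex.normSq (embv j (restr j w) a)
      = if a.1 = j then Complex.normSq (w a) else 0 := by
    intro j
    rw [embv_restr_apply, apply_ite Complex.normSq, map_zero]
  rw [Finset.sum_congr rfl fun j _ => h j]
  simp

private lemma transposeId {UB US : Matrix ((j : Fin k) × Fin (n j)) ((j : Fin k) × Fin (n j)) ℂ}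
    (j : Fin k) (i q : (j : Fin k) × Fin (n j)) :
    (star US *ᵥ embv j (restr j (fun a => UB a i))) q
      = starRingEnd ℂ ((star UB *ᵥ embv j (restr j (fun a => US a q))) i) := by
  show ((star US) q) ⬝ᵥ _ = starRingEnd ℂ (((star UB) i) ⬝ᵥ _)
  rw [dotProduct, dotProduct, map_sum]
  refine Finset.sum_congr rfl fun a _ => ?_
  rw [embv_restr_apply, embv_restr_apply, Matrix.star_apply, Matrix.star_apply]
  by_cases h : a.1 = j
  · simp only [if_pos h, Complex.star_def, RingHom.map_mul, Complex.conj_conj]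
    ring
  · simp [if_neg h]

end Blocks2

/-- Let `A₁, …, A_m` be `n × n` complex positive definite matrices, where
`n = n₁ + ⋯ + n_k` (index set encoded as the sigma type `(j : Fin k) × Fin (n j)`),
with conformal diagonal blocks `A_i^{(j)} = (A i).submatrix (Sigma.mk j) (Sigma.mk j)`.
Then the vector of eigenvalues of the block diagonal matrix
`(Σᵢ (A_i^{(1)})⁻¹) ⊕ ⋯ ⊕ (Σᵢ (A_i^{(k)})⁻¹)` is weakly majorized by the vector of
eigenvalues of `Σᵢ A_i⁻¹`. -/
theorem eigenvalues_blockDiagonal_weaklyMajorizedBy (k m : ℕ) (n : Fin k → ℕ)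
    (A : Fin m → Matrix ((j : Fin k) × Fin (n j)) ((j : Fin k) × Fin (n j)) ℂ)
    (hA : ∀ i, (A i).PosDef)
    (hB : (Matrix.blockDiagonal' (fun j =>
      ∑ i : Fin m, ((A i).submatrix (Sigma.mk j) (Sigma.mk j))⁻¹)).PosDef)
    (hS : (∑ i : Fin m, (A i)⁻¹).PosDef) :
    WeaklyMajorizedBy hB.1.eigenvalues hS.1.eigenvalues := by
  classical
  intro r
  obtain ⟨T, hTcard, hTsum, -⟩ := exists_topset hB.1.eigenvalues r
  rw [← hTsum]
  set UB := (hB.1.eigenvectorUnitary :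
    Matrix ((j : Fin k) × Fin (n j)) ((j : Fin k) × Fin (n j)) ℂ) with hUB
  set US := (hS.1.eigenvectorUnitary :
    Matrix ((j : Fin k) × Fin (n j)) ((j : Fin k) × Fin (n j)) ℂ) with hUS
  set v : ((j : Fin k) × Fin (n j)) → ((j : Fin k) × Fin (n j)) → ℂ :=
    fun i a => UB a i with hv
  set P : (j : Fin k) → (((j : Fin k) × Fin (n j)) → ℂ) → (((j : Fin k) × Fin (n j)) → ℂ) :=
    fun j w => embv j (restr j w) with hP
  set d : ((j : Fin k) × Fin (n j)) → ℝ :=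
    fun q => ∑ i ∈ T, ∑ j, Complex.normSq ((star US *ᵥ P j (v i)) q) with hd
  -- Step A : eigenvalue bound via the block inequality
  have stepA : ∀ i, hB.1.eigenvalues i
      ≤ ∑ j, (star (P j (v i)) ⬝ᵥ ((∑ i' : Fin m, (A i')⁻¹) *ᵥ P j (v i))).re := by
    intro i
    have hvb : ⇑(hB.1.eigenvectorBasis i) = v i := by
      funext a
      exact (hB.1.eigenvectorUnitary_apply a i).symm
    have h1 : hB.1.eigenvalues i = (star (v i) ⬝ᵥ
        ((Matrix.blockDiagonal' (fun j =>
          ∑ i' : Fin m, ((A i').submatrix (@Sigma.mk (Fin k) (fun j => Fin (n j)) j) (@Sigma.mk (Fin k) (fun j => Fin (n j)) j))⁻¹)) *ᵥ v i)).re := by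
      have h0 := hB.1.eigenvalues_eq i
      rw [hvb] at h0
      simpa using h0
    rw [h1, quad_blockDiagonal, Complex.re_sum]
    refine Finset.sum_le_sum fun j _ => ?_
    have hcineq : star (restr j (v i)) ⬝ᵥ
          ((∑ i' : Fin m, ((A i').submatrix (@Sigma.mk (Fin k) (fun j => Fin (n j)) j)
            (@Sigma.mk (Fin k) (fun j => Fin (n j)) j))⁻¹) *ᵥ restr j (v i))
        ≤ star (P j (v i)) ⬝ᵥ ((∑ i' : Fin m, (A i')⁻¹) *ᵥ P j (v i)) := by
      rw [dot_sum_mulVec, dot_sum_mulVec]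
      exact Finset.sum_le_sum fun i' _ => block_inv_le (hA i') j (restr j (v i))
    exact (Complex.le_def.mp hcineq).1
  -- Step B : spectral expansion
  have stepB : ∀ i j, (star (P j (v i)) ⬝ᵥ ((∑ i' : Fin m, (A i')⁻¹) *ᵥ P j (v i))).re
      = ∑ q, hS.1.eigenvalues q * Complex.normSq ((star US *ᵥ P j (v i)) q) :=
    fun i j => re_quad_eq_sum hS.1 (P j (v i))
  -- combine over the top set T
  have hchain : ∑ i ∈ T, hB.1.eigenvalues i ≤ ∑ q, hS.1.eigenvalues q * d q := by
    calc ∑ i ∈ T, hB.1.eigenvalues i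
        ≤ ∑ i ∈ T, ∑ j, ∑ q, hS.1.eigenvalues q *
            Complex.normSq ((star US *ᵥ P j (v i)) q) := by
          refine Finset.sum_le_sum fun i _ => ?_
          refine le_trans (stepA i) (le_of_eq ?_)
          exact Finset.sum_congr rfl fun j _ => stepB i j
      _ = ∑ q, hS.1.eigenvalues q * d q := by
          have hdq : ∀ q, hS.1.eigenvalues q * d q
              = ∑ i ∈ T, ∑ j, hS.1.eigenvalues q *
                  Complex.normSq ((star US *ᵥ P j (v i)) q) := by
            intro q
            rw [hd]
            rw [Finset.mul_sum]
            exact Finset.sum_congr rfl fun i _ => Finset.mul_sum _ _ _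
          rw [Finset.sum_congr rfl fun q _ => hdq q]
          exact (Finset.sum_congr rfl fun i _ => Finset.sum_comm).trans Finset.sum_comm
  refine le_trans hchain ?_
  -- Step C : the Ky Fan combinatorial bound
  apply sum_mul_le_sumLargest_s8
  · exact fun q => (hS.eigenvalues_pos q).le
  · exact fun q => Finset.sum_nonneg fun i _ => Finset.sum_nonneg fun j _ =>
      Complex.normSq_nonneg _
  · -- d q ≤ 1
    intro q
    have htr : ∀ i ∈ T, ∀ j, Complex.normSq ((star US *ᵥ P j (v i)) q)
        = Complex.normSq ((star UB *ᵥ P j (fun a => US a q)) i) := by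
      intro i _ j
      rw [hP, hv]
      rw [transposeId j i q, Complex.normSq_conj]
    calc d q = ∑ i ∈ T, ∑ j, Complex.normSq ((star UB *ᵥ P j (fun a => US a q)) i) := by
          rw [hd]
          exact Finset.sum_congr rfl fun i hi => Finset.sum_congr rfl fun j _ => htr i hi j
      _ = ∑ j, ∑ i ∈ T, Complex.normSq ((star UB *ᵥ P j (fun a => US a q)) i) :=
          Finset.sum_comm
      _ ≤ ∑ j, ∑ i, Complex.normSq ((star UB *ᵥ P j (fun a => US a q)) i) := by
          refine Finset.sum_le_sum fun j _ => ?_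
          exact Finset.sum_le_sum_of_subset_of_nonneg (Finset.subset_univ T)
            (fun i _ _ => Complex.normSq_nonneg _)
      _ = ∑ j, ∑ a, Complex.normSq ((P j (fun a => US a q)) a) := by
          exact Finset.sum_congr rfl fun j _ =>
            parseval' (hB.1.eigenvectorUnitary).2 (P j (fun a => US a q))
      _ = ∑ a, Complex.normSq (US a q) := sum_normSq_P _
      _ = 1 := unitary_col_normSq (hS.1.eigenvectorUnitary).2 q
  · -- ∑ d ≤ r
    calc ∑ q, d q = ∑ i ∈ T, ∑ j, ∑ q, Complex.normSq ((star US *ᵥ P j (v i)) q) := by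
          rw [hd]
          exact (Finset.sum_comm.trans (Finset.sum_congr rfl fun i _ => Finset.sum_comm))
      _ = ∑ i ∈ T, ∑ j, ∑ a, Complex.normSq ((P j (v i)) a) :=
          Finset.sum_congr rfl fun i _ => Finset.sum_congr rfl fun j _ =>
            parseval' (hS.1.eigenvectorUnitary).2 (P j (v i))
      _ = ∑ i ∈ T, ∑ a, Complex.normSq (v i a) :=
          Finset.sum_congr rfl fun i _ => sum_normSq_P _
      _ = ∑ i ∈ T, (1 : ℝ) :=
          Finset.sum_congr rfl fun i _ => unitary_col_normSq (hB.1.eigenvectorUnitary).2 i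
      _ = (T.card : ℝ) := by simp
      _ ≤ (r : ℝ) := by
          rw [hTcard]
          exact_mod_cast Nat.cast_le.mpr (min_le_left _ _)
end

section
/- Let A₁, …, A_m ∈ ℙ_n and let n = n₁ + ⋯ + n_k; for each i partition A_i conformally, writing A_i^{(j)} ∈ ℙ_{n_j} for the j-th diagonal block of A_i, and write (A_i⁻¹)^{(j)} for the j-th diagonal block of A_i⁻¹. Then for every r = 1, …, n, the r-th largest eigenvalue of the block diagonal matrix (Σ_{i=1}^m (A_i^{(1)})⁻¹) ⊕ ⋯ ⊕ (Σ_{i=1}^m (A_i^{(k)})⁻¹) is at most the r-th largest eigenvalue of the block diagonal matrix (Σ_{i=1}^m (A_i⁻¹)^{(1)}) ⊕ ⋯ ⊕ (Σ_{i=1}^m (A_i⁻¹)^{(k)}). -/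
open Matrix
open scoped ComplexOrder


/-- The `r`-th largest entry (counting from `r = 1`) of a real vector. -/
noncomputable def kthLargest {ι : Type*} [Fintype ι] (x : ι → ℝ) (r : ℕ) : ℝ :=
  ((((Finset.univ.val.map x).sort (· ≤ ·)).reverse).getD (r - 1)) 0

section kth
variable {ι : Type*} [Fintype ι] (x : ι → ℝ)

/-- the descending list -/
noncomputable def dlist : List ℝ := ((Finset.univ.val.map x).sort (· ≤ ·)).reverse

lemma dlist_length : (dlist x).length = Fintype.card ι := by
  simp [dlist, Multiset.length_sort]

lemma dlist_coe : (dlist x : Multiset ℝ) = Finset.univ.val.map x := by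
  simp [dlist, Multiset.coe_reverse, Multiset.sort_eq]

lemma dlist_anti {i j : ℕ} (hij : i ≤ j) (hj : j < (dlist x).length) :
    (dlist x)[j] ≤ (dlist x)[i]'(lt_of_le_of_lt hij hj) := by
  have hs := Multiset.pairwise_sort (r := (· ≤ ·)) (s := Finset.univ.val.map x)
  set l := (Finset.univ.val.map x).sort (· ≤ ·) with hl
  have hlen : (dlist x).length = l.length := by simp [dlist, hl]
  rcases eq_or_lt_of_le hij with rfl | hij'
  · exact le_refl _
  · have hj' : j < l.length := hlen ▸ hj
    have hi' : i < l.length := lt_of_le_of_lt hij hj'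
    show l.reverse[j]'(by simpa using hj') ≤ l.reverse[i]'(by simpa using hi')
    rw [List.getElem_reverse, List.getElem_reverse]
    have := hs.rel_get_of_lt (a := ⟨l.length - 1 - j, by omega⟩)
        (b := ⟨l.length - 1 - i, by omega⟩) (by simp only [Fin.mk_lt_mk]; omega)
    simpa using this

lemma kthLargest_eq_get {r : ℕ} (h1 : 1 ≤ r) (h2 : r ≤ Fintype.card ι) :
    kthLargest x r = (dlist x)[r-1]'(by rw [dlist_length]; omega) :=
  List.getD_eq_getElem _ _ _

/-- count of entries ≥ c -/
lemma cnt_eq (c : ℝ) :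
    (Finset.univ.filter fun i => c ≤ x i).card
      = (dlist x).countP (fun a => decide (c ≤ a)) := by
  classical
  have : ((dlist x : Multiset ℝ).countP (fun a => c ≤ a)) = (dlist x).countP (fun a => decide (c ≤ a)) := by
    simp [Multiset.coe_countP]
  rw [← this, dlist_coe, Multiset.countP_map]
  rfl

lemma kth_le_count {r : ℕ} (h1 : 1 ≤ r) (h2 : r ≤ Fintype.card ι) :
    r ≤ (Finset.univ.filter fun i => kthLargest x r ≤ x i).card := by
  rw [cnt_eq, kthLargest_eq_get x h1 h2]
  set L := dlist x with hL
  have hlen : L.length = Fintype.card ι := dlist_length x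
  have hgd : (dlist x).length = L.length := by rw [hL]
  set p : ℝ → Bool := fun a => decide (L[r-1]'(by omega) ≤ a) with hp
  have : L.countP p = (L.take r).countP p + (L.drop r).countP p := by
    rw [← List.countP_append, List.take_append_drop]
  rw [this]
  have htake : (L.take r).countP p = (L.take r).length := by
    rw [List.countP_eq_length]
    intro a ha
    rw [List.mem_iff_getElem] at ha
    obtain ⟨i, hi, rfl⟩ := ha
    rw [List.getElem_take]
    have hiL : i < r := by
      have := hi; rw [List.length_take] at this; omega
    simp only [hp, decide_eq_true_eq]
    exact dlist_anti x (by omega) (by omega)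
  rw [htake, List.length_take]
  omega

lemma count_le_kth {r : ℕ} {c : ℝ} (h1 : 1 ≤ r)
    (hc : r ≤ (Finset.univ.filter fun i => c ≤ x i).card) :
    c ≤ kthLargest x r := by
  by_cases h2 : r ≤ Fintype.card ι
  swap
  · exfalso
    have := (Finset.univ.filter fun i => c ≤ x i).card_le_univ
    omega
  rw [kthLargest_eq_get x h1 h2]
  by_contra hlt
  push_neg at hlt
  rw [cnt_eq] at hc
  set L := dlist x with hL
  have hlen : L.length = Fintype.card ι := dlist_length x
  have hgd : (dlist x).length = L.length := by rw [hL]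
  set p : ℝ → Bool := fun a => decide (c ≤ a) with hp
  have hsplit : L.countP p = (L.take (r-1)).countP p + (L.drop (r-1)).countP p := by
    rw [← List.countP_append, List.take_append_drop]
  have hdrop : (L.drop (r-1)).countP p = 0 := by
    rw [List.countP_eq_zero]
    intro a ha
    rw [List.mem_iff_getElem] at ha
    obtain ⟨i, hi, rfl⟩ := ha
    rw [List.getElem_drop]
    have hiL : (r-1) + i < L.length := by
      have := hi; rw [List.length_drop] at this; omega
    simp only [hp, decide_eq_true_eq, not_le]
    calc L[(r-1)+i] ≤ L[r-1]'(by omega) := dlist_anti x (by omega) (by omega)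
      _ < c := hlt
  have := List.countP_le_length (p := p) (l := L.take (r-1))
  rw [List.length_take] at this
  omega

end kth


section spec
variable {ι : Type*} [Fintype ι] [DecidableEq ι] {X Y : Matrix ι ι ℂ}

lemma unitary_mul_star (hX : X.IsHermitian) :
    (hX.eigenvectorUnitary : Matrix ι ι ℂ) * ((hX.eigenvectorUnitary : Matrix ι ι ℂ))ᴴ = 1 :=
  (Unitary.mem_iff.mp hX.eigenvectorUnitary.2).2

lemma conj_mul_self_eq (z : ℂ) : (starRingEnd ℂ) z * z = (Complex.normSq z : ℂ) := by
  rw [mul_comm, Complex.mul_conj]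

lemma conj_mul_self_re (z : ℂ) : ((starRingEnd ℂ) z * z).re = Complex.normSq z := by
  rw [conj_mul_self_eq, Complex.ofReal_re]

lemma qf_eq (hX : X.IsHermitian) (v : ι → ℂ) :
    star v ⬝ᵥ (X *ᵥ v)
      = ∑ i, (hX.eigenvalues i : ℂ) *
          ((starRingEnd ℂ) ((star (hX.eigenvectorUnitary : Matrix ι ι ℂ) *ᵥ v) i)
            * ((star (hX.eigenvectorUnitary : Matrix ι ι ℂ) *ᵥ v) i)) := by
  set U := (hX.eigenvectorUnitary : Matrix ι ι ℂ) with hU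
  set w := star U *ᵥ v with hw
  have h1 : star v ⬝ᵥ (X *ᵥ v) = star w ⬝ᵥ (diagonal (RCLike.ofReal ∘ hX.eigenvalues) *ᵥ w) := by
    conv_lhs => rw [hX.spectral_theorem, Unitary.conjStarAlgAut_apply]
    rw [hw, star_mulVec, ← mulVec_mulVec, ← mulVec_mulVec, dotProduct_mulVec (star v),
      star_eq_conjTranspose, conjTranspose_conjTranspose]
  rw [h1]
  simp only [dotProduct, mulVec_diagonal, Pi.star_apply, Function.comp_apply, RCLike.star_def]
  congr 1
  ext i
  rw [mul_left_comm]
  rfl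

lemma qf_re (hX : X.IsHermitian) (v : ι → ℂ) :
    (star v ⬝ᵥ (X *ᵥ v)).re
      = ∑ i, hX.eigenvalues i *
          Complex.normSq ((star (hX.eigenvectorUnitary : Matrix ι ι ℂ) *ᵥ v) i) := by
  rw [qf_eq hX v, Complex.re_sum]
  congr 1; ext i
  rw [conj_mul_self_eq, ← Complex.ofReal_mul, Complex.ofReal_re]

lemma norm_pres (hX : X.IsHermitian) (v : ι → ℂ) :
    ∑ i, Complex.normSq ((star (hX.eigenvectorUnitary : Matrix ι ι ℂ) *ᵥ v) i)
      = ∑ i, Complex.normSq (v i) := by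
  have h1 : star (star (hX.eigenvectorUnitary : Matrix ι ι ℂ) *ᵥ v)
        ⬝ᵥ (star (hX.eigenvectorUnitary : Matrix ι ι ℂ) *ᵥ v) = star v ⬝ᵥ v := by
    rw [star_mulVec, star_eq_conjTranspose, conjTranspose_conjTranspose,
      dotProduct_mulVec, vecMul_vecMul, unitary_mul_star hX, vecMul_one]
  have h2 := congrArg Complex.re h1
  simpa [dotProduct, Complex.re_sum, Pi.star_apply, RCLike.star_def, conj_mul_self_re, Complex.normSq_apply] using h2

lemma mulVec_star_ne_zero (hX : X.IsHermitian) {v : ι → ℂ} (hv : v ≠ 0) :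
    star (hX.eigenvectorUnitary : Matrix ι ι ℂ) *ᵥ v ≠ 0 := by
  intro h
  apply hv
  have := congrArg (fun y => (hX.eigenvectorUnitary : Matrix ι ι ℂ) *ᵥ y) h
  simpa [mulVec_mulVec, star_eq_conjTranspose, unitary_mul_star hX] using this


lemma count_eigen_mono (hX : X.IsHermitian) (hY : Y.IsHermitian)
    (hXY : (Y - X).PosSemidef) (c : ℝ) :
    (Finset.univ.filter fun i => c ≤ hX.eigenvalues i).card
      ≤ (Finset.univ.filter fun i => c ≤ hY.eigenvalues i).card := by
  by_contra hlt
  push_neg at hlt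
  set S := Finset.univ.filter fun i => c ≤ hX.eigenvalues i with hS
  set T := Finset.univ.filter fun i => c ≤ hY.eigenvalues i with hT
  set UX := star (hX.eigenvectorUnitary : Matrix ι ι ℂ) with hUX
  set UY := star (hY.eigenvectorUnitary : Matrix ι ι ℂ) with hUY
  set f : (ι → ℂ) →ₗ[ℂ] ((↥(Sᶜ) → ℂ) × (↥T → ℂ)) :=
    LinearMap.prod
      ((LinearMap.funLeft ℂ ℂ (Subtype.val : ↥(Sᶜ) → ι)).comp (Matrix.mulVecLin UX))
      ((LinearMap.funLeft ℂ ℂ (Subtype.val : ↥T → ι)).comp (Matrix.mulVecLin UY)) with hf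
  have hnotinj : ¬ Function.Injective f := by
    intro hinj
    have := LinearMap.finrank_le_finrank_of_injective hinj
    rw [Module.finrank_fintype_fun_eq_card, Module.finrank_prod,
      Module.finrank_fintype_fun_eq_card, Module.finrank_fintype_fun_eq_card,
      Fintype.card_coe, Fintype.card_coe, Finset.card_compl] at this
    have hSle : S.card ≤ Fintype.card ι := S.card_le_univ.trans_eq Finset.card_univ
    omega
  rw [← LinearMap.ker_eq_bot] at hnotinj
  obtain ⟨v, hvker, hv⟩ := Submodule.exists_mem_ne_zero_of_ne_bot hnotinj
  have hfv : f v = 0 := hvker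
  set w := UX *ᵥ v with hw
  set z := UY *ᵥ v with hz
  have hw0 : ∀ i, i ∉ S → w i = 0 := by
    intro i hi
    have := congrArg Prod.fst hfv
    exact congrFun this ⟨i, Finset.mem_compl.mpr hi⟩
  have hz0 : ∀ i, i ∈ T → z i = 0 := by
    intro i hi
    have := congrArg Prod.snd hfv
    exact congrFun this ⟨i, hi⟩
  set t := ∑ i, Complex.normSq (v i) with ht
  -- c * t ≤ re QF X
  have h1 : c * t ≤ (star v ⬝ᵥ (X *ᵥ v)).re := by
    rw [qf_re hX v]
    have e1 : ∑ i, hX.eigenvalues i * Complex.normSq (w i)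
        = ∑ i ∈ S, hX.eigenvalues i * Complex.normSq (w i) :=
      (Finset.sum_subset S.subset_univ (by intro i _ hi; rw [hw0 i hi]; simp)).symm
    have e2 : ∑ i, Complex.normSq (w i) = ∑ i ∈ S, Complex.normSq (w i) :=
      (Finset.sum_subset S.subset_univ (by intro i _ hi; rw [hw0 i hi]; simp)).symm
    have e3 : t = ∑ i, Complex.normSq (w i) := (norm_pres hX v).symm
    rw [show (∑ i, hX.eigenvalues i * Complex.normSq ((UX *ᵥ v) i))
        = ∑ i, hX.eigenvalues i * Complex.normSq (w i) from rfl, e1, e3, e2,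
      Finset.mul_sum]
    apply Finset.sum_le_sum
    intro i hi
    have hci : c ≤ hX.eigenvalues i := (Finset.mem_filter.mp hi).2
    exact mul_le_mul_of_nonneg_right hci (Complex.normSq_nonneg _)
  -- re QF X ≤ re QF Y
  have h2 : (star v ⬝ᵥ (X *ᵥ v)).re ≤ (star v ⬝ᵥ (Y *ᵥ v)).re := by
    have := (Complex.le_def.mp (hXY.dotProduct_mulVec_nonneg v)).1
    rw [sub_mulVec, dotProduct_sub, Complex.sub_re, Complex.zero_re] at this
    linarith
  -- re QF Y < c * t
  have h3 : (star v ⬝ᵥ (Y *ᵥ v)).re < c * t := by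
    rw [qf_re hY v]
    have e1 : ∑ i, hY.eigenvalues i * Complex.normSq (z i)
        = ∑ i ∈ Tᶜ, hY.eigenvalues i * Complex.normSq (z i) :=
      (Finset.sum_subset (Tᶜ).subset_univ (by
        intro i _ hi
        rw [hz0 i (by simpa using hi)]; simp)).symm
    have e2 : ∑ i, Complex.normSq (z i) = ∑ i ∈ Tᶜ, Complex.normSq (z i) :=
      (Finset.sum_subset (Tᶜ).subset_univ (by
        intro i _ hi
        rw [hz0 i (by simpa using hi)]; simp)).symm
    have e3 : t = ∑ i, Complex.normSq (z i) := (norm_pres hY v).symm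
    have hzne : z ≠ 0 := mulVec_star_ne_zero hY hv
    obtain ⟨i0, hi0⟩ := Function.ne_iff.mp hzne
    have hi0T : i0 ∈ Tᶜ := by
      by_contra h
      exact hi0 (hz0 i0 (by simpa using h))
    rw [show (∑ i, hY.eigenvalues i * Complex.normSq ((UY *ᵥ v) i))
        = ∑ i, hY.eigenvalues i * Complex.normSq (z i) from rfl, e1, e3, e2, Finset.mul_sum]
    apply Finset.sum_lt_sum
    · intro i hi
      have hci : hY.eigenvalues i < c := by
        have := Finset.mem_compl.mp hi
        rw [hT] at this
        simpa using this
      exact mul_le_mul_of_nonneg_right hci.le (Complex.normSq_nonneg _)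
    · refine ⟨i0, hi0T, ?_⟩
      have hpos : 0 < Complex.normSq (z i0) := Complex.normSq_pos.mpr hi0
      have hci : hY.eigenvalues i0 < c := by
        have := Finset.mem_compl.mp hi0T
        rw [hT] at this
        simpa using this
      exact mul_lt_mul_of_pos_right hci hpos
  linarith

end spec


section blocks
variable {k : ℕ} {n : Fin k → ℕ}

/-- embedding matrix of the j-th block -/
def emb (n : Fin k → ℕ) (j : Fin k) : Matrix ((j : Fin k) × Fin (n j)) (Fin (n j)) ℂ :=
  of fun p q => if p = ⟨j, q⟩ then 1 else 0

lemma emb_conjT_mul_mul (j : Fin k) (M : Matrix ((j : Fin k) × Fin (n j)) ((j : Fin k) × Fin (n j)) ℂ) :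
    (emb n j)ᴴ * M * (emb n j) = M.submatrix (Sigma.mk j) (Sigma.mk j) := by
  ext q q'
  simp only [mul_apply, conjTranspose_apply, emb, of_apply, submatrix_apply]
  simp [apply_ite (starRingEnd ℂ), Finset.sum_ite_eq', mul_ite, ite_mul]

lemma emb_conjT_mul_emb (j : Fin k) : (emb n j)ᴴ * (emb n j) = (1 : Matrix (Fin (n j)) (Fin (n j)) ℂ) := by
  ext q q'
  simp only [mul_apply, conjTranspose_apply, emb, of_apply, one_apply]
  simp [apply_ite (starRingEnd ℂ), Finset.sum_ite_eq', mul_ite, ite_mul, eq_comm]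

lemma emb_mulVec (j : Fin k) (x : Fin (n j) → ℂ) (q : Fin (n j)) :
    ((emb n j) *ᵥ x) ⟨j, q⟩ = x q := by
  simp only [mulVec, dotProduct, emb, of_apply]
  simp [Finset.sum_ite_eq', ite_mul, eq_comm]

lemma submatrix_posDef {A : Matrix ((j : Fin k) × Fin (n j)) ((j : Fin k) × Fin (n j)) ℂ}
    (hA : A.PosDef) (j : Fin k) : (A.submatrix (Sigma.mk j) (Sigma.mk j)).PosDef := by
  rw [← emb_conjT_mul_mul j A]
  refine Matrix.PosDef.of_dotProduct_mulVec_pos (isHermitian_conjTranspose_mul_mul _ hA.1) fun x hx => ?_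
  have hne : (emb n j) *ᵥ x ≠ 0 := by
    obtain ⟨q, hq⟩ := Function.ne_iff.mp hx
    intro h
    exact hq (by rw [← emb_mulVec j x q, h]; rfl)
  simpa only [star_mulVec, dotProduct_mulVec, vecMul_vecMul] using hA.dotProduct_mulVec_pos hne

lemma key_psd {A : Matrix ((j : Fin k) × Fin (n j)) ((j : Fin k) × Fin (n j)) ℂ}
    (hA : A.PosDef) (j : Fin k) :
    ((A⁻¹).submatrix (Sigma.mk j) (Sigma.mk j)
      - (A.submatrix (Sigma.mk j) (Sigma.mk j))⁻¹).PosSemidef := by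
  set E := emb n j with hE
  set B := A.submatrix (Sigma.mk j) (Sigma.mk j) with hB
  have hBpd : B.PosDef := submatrix_posDef hA j
  haveI : Invertible A := hA.isUnit.invertible
  haveI : Invertible B := hBpd.isUnit.invertible
  have hB1 : Eᴴ * A * E = B := emb_conjT_mul_mul j A
  set N := A⁻¹ - E * B⁻¹ * Eᴴ with hN
  have hNherm : Nᴴ = N := by
    rw [hN, conjTranspose_sub, hA.1.inv, conjTranspose_mul, conjTranspose_mul,
      conjTranspose_conjTranspose, hBpd.1.inv, Matrix.mul_assoc]
  have hNAN : Nᴴ * A * N = N := by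
    rw [hNherm, hN]
    have hB1' : ∀ X : Matrix (Fin (n j)) ((j : Fin k) × Fin (n j)) ℂ,
        Eᴴ * (A * (E * X)) = B * X := by
      intro X
      rw [← Matrix.mul_assoc, ← Matrix.mul_assoc, hB1]
    simp only [sub_mul, mul_sub, Matrix.mul_assoc]
    rw [Matrix.inv_mul_cancel_left_of_invertible, Matrix.mul_inv_of_invertible,
      Matrix.mul_one, hB1', Matrix.inv_mul_cancel_left_of_invertible,
      Matrix.inv_mul_cancel_left_of_invertible]
    abel
  have hNpsd : N.PosSemidef := by
    have := hA.posSemidef.conjTranspose_mul_mul_same N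
    rwa [hNAN] at this
  have hfinal : (A⁻¹).submatrix (Sigma.mk j) (Sigma.mk j) - B⁻¹ = Eᴴ * N * E := by
    rw [hN, Matrix.mul_sub, Matrix.sub_mul, emb_conjT_mul_mul j A⁻¹]
    congr 1
    simp only [← Matrix.mul_assoc]
    rw [emb_conjT_mul_emb, Matrix.one_mul, Matrix.mul_assoc, emb_conjT_mul_emb, Matrix.mul_one]
  rw [hfinal]
  exact hNpsd.conjTranspose_mul_mul_same E

lemma psd_blockDiagonal' {D : ∀ j, Matrix (Fin (n j)) (Fin (n j)) ℂ}
    (hD : ∀ j, (D j).PosSemidef) : (blockDiagonal' D).PosSemidef := by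
  refine Matrix.PosSemidef.of_dotProduct_mulVec_nonneg ?_ ?_
  · show (blockDiagonal' D)ᴴ = _
    have h : (fun j => (D j)ᴴ) = D := funext fun j => (hD j).1
    rw [blockDiagonal'_conjTranspose, h]
  · intro x
    have key : star x ⬝ᵥ (blockDiagonal' D *ᵥ x)
        = ∑ j, star (fun a => x ⟨j, a⟩) ⬝ᵥ (D j *ᵥ (fun a => x ⟨j, a⟩)) := by
      simp only [dotProduct, mulVec, Pi.star_apply, blockDiagonal'_apply]
      rw [← Finset.univ_sigma_univ, Finset.sum_sigma]
      refine Finset.sum_congr rfl fun j _ => Finset.sum_congr rfl fun a _ => ?_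
      congr 1
      rw [Finset.sum_sigma]
      have h : ∀ j' : Fin k,
          (∑ b : Fin (n j'),
            (if h : (⟨j, a⟩ : (i : Fin k) × Fin (n i)).fst = (⟨j', b⟩ : (i : Fin k) × Fin (n i)).fst
              then D j a (cast (by rw [show j = j' from h]) b) else 0) * x ⟨j', b⟩)
          = if h : j = j' then (∑ b : Fin (n j), D j a b * x ⟨j, b⟩) else 0 := by
        intro j'
        by_cases h : j = j'
        · subst h
          simp
        · simp [h]
      rw [Finset.sum_congr rfl fun j' _ => h j']
      simp
    rw [key]
    exact Finset.sum_nonneg fun j _ => (hD j).dotProduct_mulVec_nonneg _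
end blocks


/-- Let `A₁, …, A_m` be `n × n` complex positive definite matrices, where
`n = n₁ + ⋯ + n_k` (index set encoded as the sigma type `(j : Fin k) × Fin (n j)`),
with conformal diagonal blocks `A_i^{(j)} = (A i).submatrix (Sigma.mk j) (Sigma.mk j)`
and `(A_i⁻¹)^{(j)} = ((A i)⁻¹).submatrix (Sigma.mk j) (Sigma.mk j)`.  Then for every
`r = 1, …, n`, the `r`-th largest eigenvalue of
`(Σᵢ (A_i^{(1)})⁻¹) ⊕ ⋯ ⊕ (Σᵢ (A_i^{(k)})⁻¹)` is at most the `r`-th largest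
eigenvalue of `(Σᵢ (A_i⁻¹)^{(1)}) ⊕ ⋯ ⊕ (Σᵢ (A_i⁻¹)^{(k)})`. -/
theorem kthLargest_eigenvalue_le (k m : ℕ) (n : Fin k → ℕ)
    (A : Fin m → Matrix ((j : Fin k) × Fin (n j)) ((j : Fin k) × Fin (n j)) ℂ)
    (hA : ∀ i, (A i).PosDef)
    (hX : (Matrix.blockDiagonal' (fun j =>
      ∑ i : Fin m, ((A i).submatrix (Sigma.mk j) (Sigma.mk j))⁻¹)).PosDef)
    (hY : (Matrix.blockDiagonal' (fun j =>
      ∑ i : Fin m, ((A i)⁻¹).submatrix (Sigma.mk j) (Sigma.mk j))).PosDef) :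
    ∀ r : ℕ, 1 ≤ r → r ≤ Fintype.card ((j : Fin k) × Fin (n j)) →
      kthLargest hX.1.eigenvalues r ≤ kthLargest hY.1.eigenvalues r := by
  intro r hr1 hr2
  have hXY : ((Matrix.blockDiagonal' (fun j =>
        ∑ i : Fin m, ((A i)⁻¹).submatrix (Sigma.mk j) (Sigma.mk j)))
      - (Matrix.blockDiagonal' (fun j =>
        ∑ i : Fin m, ((A i).submatrix (Sigma.mk j) (Sigma.mk j))⁻¹))).PosSemidef := by
    rw [← blockDiagonal'_sub]
    apply psd_blockDiagonal'
    intro j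
    have : ((fun j => ∑ i : Fin m, ((A i)⁻¹).submatrix (Sigma.mk j) (Sigma.mk j))
          - (fun j => ∑ i : Fin m, ((A i).submatrix (Sigma.mk j) (Sigma.mk j))⁻¹)) j
        = ∑ i : Fin m, (((A i)⁻¹).submatrix (Sigma.mk j) (Sigma.mk j)
            - ((A i).submatrix (Sigma.mk j) (Sigma.mk j))⁻¹) := by
      rw [Pi.sub_apply, Finset.sum_sub_distrib]
    rw [this]
    exact Finset.sum_induction _ (fun M => Matrix.PosSemidef M)
      (fun a b ha hb => ha.add hb) Matrix.PosSemidef.zero (fun i _ => key_psd (hA i) j)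
  exact count_le_kth _ hr1 ((kth_le_count _ hr1 hr2).trans (count_eigen_mono hX.1 hY.1 hXY _))
end

section
/- For every real number x > 0, one has (1 + 3^x)² > 2 + 2·5^x; equivalently 2·3^x + 3^{2x} > 2·5^x + 1. Consequently, for the 2×2 positive definite matrix C = [[3,2],[2,3]] with diagonal blocks C₁ = C₂ = (3) and D = I₂, for every p < 0 one has det(1 + (C₁⁻¹)^p)·det(1 + (C₂⁻¹)^p) > det(I₂ + (C⁻¹)^p), so the determinantal inequality det(I_{n₁} + (C₁⁻¹D₁)^p)⋯det(I_{n_k} + (C_k⁻¹D_k)^p) ≤ det(I_n + (C⁻¹D)^p) fails for every p < 0. -/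
open Matrix
open scoped ComplexOrder

lemma key_real (x : ℝ) (hx : 0 < x) :
    2 * (5:ℝ) ^ x + 1 < 2 * (3:ℝ) ^ x + (9:ℝ) ^ x := by
  set f : ℝ → ℝ := fun t => 2 * (3:ℝ) ^ t + (9:ℝ) ^ t - 2 * (5:ℝ) ^ t - 1 with hf
  have hderiv : ∀ t : ℝ, HasDerivAt f
      (2 * ((3:ℝ) ^ t * Real.log 3) + (9:ℝ) ^ t * Real.log 9
        - 2 * ((5:ℝ) ^ t * Real.log 5)) t := by
    intro t
    have h3 := (Real.hasStrictDerivAt_const_rpow (by norm_num : (0:ℝ) < 3) t).hasDerivAt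
    have h9 := (Real.hasStrictDerivAt_const_rpow (by norm_num : (0:ℝ) < 9) t).hasDerivAt
    have h5 := (Real.hasStrictDerivAt_const_rpow (by norm_num : (0:ℝ) < 5) t).hasDerivAt
    simpa [hf] using (((h3.const_mul 2).add h9).sub (h5.const_mul 2)).sub_const 1
  have hmono : StrictMonoOn f (Set.Ici 0) := by
    apply strictMonoOn_of_deriv_pos (convex_Ici 0)
    · exact fun t _ => ((hderiv t).differentiableAt).continuousAt.continuousWithinAt
    · intro t ht
      rw [(hderiv t).deriv]
      have hu : (0:ℝ) < (3:ℝ) ^ t := Real.rpow_pos_of_pos (by norm_num) t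
      have hv : (0:ℝ) < (9:ℝ) ^ t := Real.rpow_pos_of_pos (by norm_num) t
      have hs : (0:ℝ) < (5:ℝ) ^ t := Real.rpow_pos_of_pos (by norm_num) t
      have ht0 : (0:ℝ) ≤ t := le_of_lt (by simpa using ht)
      have huv : (5:ℝ) ^ t * (5:ℝ) ^ t ≤ (3:ℝ) ^ t * (9:ℝ) ^ t := by
        rw [← Real.mul_rpow (by norm_num) (by norm_num),
          ← Real.mul_rpow (by norm_num) (by norm_num)]
        exact Real.rpow_le_rpow (by norm_num) (by norm_num) ht0
      have hsum : 2 * (5:ℝ) ^ t ≤ (3:ℝ) ^ t + (9:ℝ) ^ t := by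
        nlinarith [sq_nonneg ((3:ℝ) ^ t - (9:ℝ) ^ t),
          sq_nonneg ((3:ℝ) ^ t + (9:ℝ) ^ t - 2 * (5:ℝ) ^ t)]
      have hlog9 : Real.log 9 = 2 * Real.log 3 := by
        rw [show (9:ℝ) = 3 ^ 2 by norm_num, Real.log_pow]; ring
      have hlog5 : Real.log 5 < 2 * Real.log 3 := by
        rw [← hlog9]; exact Real.log_lt_log (by norm_num) (by norm_num)
      have hlog3 : 0 < Real.log 3 := Real.log_pos (by norm_num)
      rw [hlog9]
      nlinarith [mul_le_mul_of_nonneg_left hsum (le_of_lt hlog3)]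
  have h0 : f 0 = 0 := by simp [hf]
  have := hmono (Set.self_mem_Ici) (Set.mem_Ici.mpr hx.le) hx
  rw [h0] at this
  simp only [hf] at this
  linarith

lemma nine_rpow (x : ℝ) : (9:ℝ) ^ x = (3:ℝ) ^ x * (3:ℝ) ^ x := by
  rw [← Real.mul_rpow (by norm_num) (by norm_num)]; norm_num

lemma det_one_add_rpow {m : Type*} [Fintype m] [DecidableEq m]
    {A : Matrix m m ℂ} (hA : A.IsHermitian) (p : ℝ) :
    (1 + IsHermitian.rpow hA p).det = ∏ i, (1 + ((hA.eigenvalues i ^ p : ℝ) : ℂ)) := by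
  set U : Matrix m m ℂ := (hA.eigenvectorUnitary : Matrix m m ℂ) with hU
  have hUU : U * star U = 1 := Matrix.mem_unitaryGroup_iff.mp hA.eigenvectorUnitary.2
  have key : (1 : Matrix m m ℂ) + IsHermitian.rpow hA p
      = U * (1 + Matrix.diagonal (fun i => ((hA.eigenvalues i ^ p : ℝ) : ℂ))) * star U := by
    rw [mul_add, add_mul, mul_one]
    rw [IsHermitian.rpow, hUU]
  have hUU' : star U * U = 1 := Matrix.mem_unitaryGroup_iff'.mp hA.eigenvectorUnitary.2
  rw [key, det_mul, det_mul, mul_comm, ← mul_assoc, ← det_mul, hUU', det_one, one_mul]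
  rw [show (1 : Matrix m m ℂ) = Matrix.diagonal (fun _ => 1) from (Matrix.diagonal_one).symm,
    Matrix.diagonal_add, Matrix.det_diagonal]

lemma trace_eq_sum_eigs {m : Type*} [Fintype m] [DecidableEq m]
    {A : Matrix m m ℂ} (hA : A.IsHermitian) :
    A.trace = ∑ i, (hA.eigenvalues i : ℂ) := by
  conv_lhs => rw [hA.spectral_theorem]
  rw [Unitary.conjStarAlgAut_apply, Matrix.trace_mul_cycle]
  have hUU : star (hA.eigenvectorUnitary : Matrix m m ℂ) *
      (hA.eigenvectorUnitary : Matrix m m ℂ) = 1 :=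
    Matrix.mem_unitaryGroup_iff'.mp hA.eigenvectorUnitary.2
  rw [hUU, one_mul, Matrix.trace_diagonal]
  rfl

/-- For every real `x > 0` one has `(1 + 3^x)² > 2 + 2·5^x`, equivalently
`2·3^x + 3^{2x} > 2·5^x + 1`.  Consequently, for the positive definite matrix
`C = !![3, 2; 2, 3]` with diagonal blocks `C₁ = C₂ = !![3]` and `D = I₂`, for every
`p < 0` one has `det(1 + (C₁⁻¹)^p) · det(1 + (C₂⁻¹)^p) > det(I₂ + (C⁻¹)^p)`: the
determinantal inequality `∏ⱼ det(I + (Cⱼ⁻¹Dⱼ)^p) ≤ det(I + (C⁻¹D)^p)` fails for every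
`p < 0`. -/
theorem det_rpow_counterexample_of_neg
    (hC : (!![3, 2; 2, 3] : Matrix (Fin 2) (Fin 2) ℂ).PosDef)
    (hC₁ : (!![3] : Matrix (Fin 1) (Fin 1) ℂ).PosDef)
    (hC₂ : (!![3] : Matrix (Fin 1) (Fin 1) ℂ).PosDef) :
    (∀ x : ℝ, 0 < x →
      (2 + 2 * (5 : ℝ) ^ x < (1 + (3 : ℝ) ^ x) ^ 2 ∧
        2 * (5 : ℝ) ^ x + 1 < 2 * (3 : ℝ) ^ x + (3 : ℝ) ^ (2 * x))) ∧
    ∀ p : ℝ, p < 0 →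
      (1 + IsHermitian.rpow hC.inv.1 p).det <
        (1 + IsHermitian.rpow hC₁.inv.1 p).det *
          (1 + IsHermitian.rpow hC₂.inv.1 p).det := by
  have h32x : ∀ x : ℝ, (3:ℝ) ^ (2 * x) = (9:ℝ) ^ x := by
    intro x
    rw [two_mul, Real.rpow_add (by norm_num), nine_rpow]
  constructor
  · intro x hx
    have h := key_real x hx
    constructor
    · have := nine_rpow x; nlinarith
    · rw [h32x]; exact h
  · intro p hp
    -- eigenvalue of the 1×1 block
    have hdet1 : (!![3] : Matrix (Fin 1) (Fin 1) ℂ)⁻¹.det = (3:ℂ)⁻¹ := by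
      rw [Matrix.det_nonsing_inv, Matrix.det_fin_one]
      simp [Ring.inverse_eq_inv']
    have heig1 : ∀ (h : (!![3] : Matrix (Fin 1) (Fin 1) ℂ)⁻¹.IsHermitian),
        h.eigenvalues 0 = 3⁻¹ := by
      intro h
      have h2 := h.det_eq_prod_eigenvalues
      rw [hdet1, Fin.prod_univ_one] at h2
      apply RCLike.ofReal_injective (K := ℂ)
      rw [← h2]; norm_num
    -- the 2×2 matrix: trace and det of the inverse
    have hCdet : (!![3, 2; 2, 3] : Matrix (Fin 2) (Fin 2) ℂ).det = 5 := by
      simp [Matrix.det_fin_two_of]; norm_num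
    have hdet2 : (!![3, 2; 2, 3] : Matrix (Fin 2) (Fin 2) ℂ)⁻¹.det = (5:ℂ)⁻¹ := by
      rw [Matrix.det_nonsing_inv, hCdet]
      simp [Ring.inverse_eq_inv']
    have hinv2 : (!![3, 2; 2, 3] : Matrix (Fin 2) (Fin 2) ℂ)⁻¹
        = !![3/5, -(2/5); -(2/5), 3/5] := by
      rw [Matrix.inv_def, Matrix.adjugate_fin_two_of, hCdet]
      norm_num [Matrix.smul_of]
    have htr2 : (!![3, 2; 2, 3] : Matrix (Fin 2) (Fin 2) ℂ)⁻¹.trace = 6/5 := by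
      rw [hinv2, Matrix.trace_fin_two_of]; norm_num
    have hsum : hC.inv.1.eigenvalues 0 + hC.inv.1.eigenvalues 1 = 6/5 := by
      have h2 := trace_eq_sum_eigs hC.inv.1
      rw [htr2, Fin.sum_univ_two] at h2
      apply Complex.ofReal_injective
      push_cast
      rw [← h2]
    have hprod : hC.inv.1.eigenvalues 0 * hC.inv.1.eigenvalues 1 = 1/5 := by
      have h2 := hC.inv.1.det_eq_prod_eigenvalues
      rw [hdet2, Fin.prod_univ_two] at h2
      apply RCLike.ofReal_injective (K := ℂ)
      push_cast
      rw [← h2]; norm_num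
    have hcases : (hC.inv.1.eigenvalues 0 = 1 ∧ hC.inv.1.eigenvalues 1 = 1/5) ∨
        (hC.inv.1.eigenvalues 0 = 1/5 ∧ hC.inv.1.eigenvalues 1 = 1) := by
      have hq : (hC.inv.1.eigenvalues 0 - 1) * (hC.inv.1.eigenvalues 0 - 1/5) = 0 := by
        linear_combination (hC.inv.1.eigenvalues 0) * hsum - hprod
      rcases mul_eq_zero.mp hq with h | h
      · left; constructor <;> linarith
      · right; constructor <;> linarith
    -- compute the determinants
    have hd1 : (1 + IsHermitian.rpow hC₁.inv.1 p).det
        = ((1 + (3⁻¹:ℝ) ^ p : ℝ) : ℂ) := by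
      rw [det_one_add_rpow, Fin.prod_univ_one, heig1]
      push_cast; ring
    have hd2 : (1 + IsHermitian.rpow hC₂.inv.1 p).det
        = ((1 + (3⁻¹:ℝ) ^ p : ℝ) : ℂ) := by
      rw [det_one_add_rpow, Fin.prod_univ_one, heig1]
      push_cast; ring
    have hdC : (1 + IsHermitian.rpow hC.inv.1 p).det
        = ((2 * (1 + ((1/5:ℝ)) ^ p) : ℝ) : ℂ) := by
      rw [det_one_add_rpow, Fin.prod_univ_two]
      rcases hcases with ⟨h0, h1⟩ | ⟨h0, h1⟩ <;>
        · rw [h0, h1]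
          push_cast [Real.one_rpow]
          ring
    rw [hdC, hd1, ← Complex.ofReal_mul, Complex.real_lt_real]
    -- reduce to the real inequality
    have hxpos : 0 < -p := by linarith
    have h5 : ((1/5:ℝ)) ^ p = (5:ℝ) ^ (-p) := by
      rw [one_div, Real.inv_rpow (by norm_num), ← Real.rpow_neg (by norm_num)]
    have h3 : ((3⁻¹:ℝ)) ^ p = (3:ℝ) ^ (-p) := by
      rw [Real.inv_rpow (by norm_num), ← Real.rpow_neg (by norm_num)]
    rw [h5, h3]
    have h := key_real (-p) hxpos
    have h9 := nine_rpow (-p)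
    nlinarith
end
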